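/- arXiv:2310.07919 — 2 statements merged into one kernel-verified Lean document; each statement's English description precedes it below -/
import Mathlib

section
/- Let (V,E) be a history sDAG and let f : E → W be an edge weight function with W clade-ordered with respect to f and (V,E). Then there exists a history sDAG (V',E') which is a trim of (V,E) such that the histories in (V',E') are exactly the minimum-weight (with respect to g_f) histories in (V,E). -/
universe u v

/-- A node of a history sDAG: either the universal ancestor (UA) node `ρ`,
or a node carrying a label `ℓ : Y` and a subpartition `U : Set (Set Y)`. -/
inductive HNode (Y : Type u) : Type u
  | ua : HNode Y
  | node : Y → Set (Set Y) → HNode Y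

namespace HistorySDAGs

variable {Y : Type u}

/-- `U ∈ Part(Y)`: `U` is a set of pairwise disjoint nonempty (finite) clades with `|U| ≠ 1`. -/
def IsPart (U : Set (Set Y)) : Prop :=
  (∀ C ∈ U, C ≠ ∅) ∧
  (∀ C₁ ∈ U, ∀ C₂ ∈ U, C₁ ≠ C₂ → Disjoint C₁ C₂) ∧
  (∀ C, U ≠ {C}) ∧
  U.Finite ∧ ∀ C ∈ U, C.Finite

open Classical in
/-- The clade union of a node. -/
noncomputable def cladeUnion : HNode Y → Set Y
  | HNode.ua => ∅
  | HNode.node ℓ U => if U = ∅ then {ℓ} else ⋃₀ U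

/-- Reachability via directed edges in `E`. -/
def Reach (E : Set (HNode Y × HNode Y)) (a b : HNode Y) : Prop :=
  Relation.ReflTransGen (fun x y => (x, y) ∈ E) a b

/-- `(V, E)` is a history sDAG on labels `Y`. -/
structure IsHSDAG (V : Set (HNode Y)) (E : Set (HNode Y × HNode Y)) : Prop where
  ua_mem : HNode.ua ∈ V
  valid : ∀ ℓ U, HNode.node ℓ U ∈ V → IsPart U
  edge_mem : ∀ e ∈ E, e.1 ∈ V ∧ e.2 ∈ V
  reach_ua : ∀ v ∈ V, Reach E HNode.ua v
  no_in_ua : ∀ v : HNode Y, (v, HNode.ua) ∉ E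
  edge_clade : ∀ ℓ U v, (HNode.node ℓ U, v) ∈ E → cladeUnion v ∈ U
  clade_cov : ∀ ℓ U, HNode.node ℓ U ∈ V → ∀ C ∈ U,
      ∃ v, (HNode.node ℓ U, v) ∈ E ∧ cladeUnion v = C

/-- Every node-clade pair of `V` has exactly one descendant edge in `E`. -/
def UniqueDesc (V : Set (HNode Y)) (E : Set (HNode Y × HNode Y)) : Prop :=
  ∀ ℓ U, HNode.node ℓ U ∈ V → ∀ C ∈ U,
    ∃! vc, (HNode.node ℓ U, vc) ∈ E ∧ cladeUnion vc = C

/-- `(V, E)` is a history: a history sDAG in which `ρ` has exactly one child and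
each node-clade pair has exactly one descendant edge. -/
def IsHistory (V : Set (HNode Y)) (E : Set (HNode Y × HNode Y)) : Prop :=
  IsHSDAG V E ∧ (∃! v, (HNode.ua, v) ∈ E) ∧ UniqueDesc V E

/-- `(Vs, Es)` is a subhistory of `(V, E)` with root node `vr`. -/
structure IsSubhistoryRooted (V : Set (HNode Y)) (E : Set (HNode Y × HNode Y))
    (Vs : Set (HNode Y)) (Es : Set (HNode Y × HNode Y)) (vr : HNode Y) : Prop where
  subV : Vs ⊆ V
  subE : Es ⊆ E
  ua_not_mem : HNode.ua ∉ Vs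
  edge_mem : ∀ e ∈ Es, e.1 ∈ Vs ∧ e.2 ∈ Vs
  root_mem : vr ∈ Vs
  reach_root : ∀ v ∈ Vs, Reach Es vr v
  unique_desc : ∀ ℓ U, HNode.node ℓ U ∈ Vs → ∀ C ∈ U,
      ∃! vc, (HNode.node ℓ U, vc) ∈ Es ∧ cladeUnion vc = C

/-- `(Vs, Es)` is a subhistory of `(V, E)`. -/
def IsSubhistory (V : Set (HNode Y)) (E : Set (HNode Y × HNode Y))
    (Vs : Set (HNode Y)) (Es : Set (HNode Y × HNode Y)) : Prop :=
  ∃ vr, IsSubhistoryRooted V E Vs Es vr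

/-- `(Vt, Et)` is a history in (a trim of) the history sDAG `(V, E)`. -/
def HistoryIn (V : Set (HNode Y)) (E : Set (HNode Y × HNode Y))
    (Vt : Set (HNode Y)) (Et : Set (HNode Y × HNode Y)) : Prop :=
  Vt ⊆ V ∧ Et ⊆ E ∧ IsHistory Vt Et

/-- The set of labels of leaf nodes in a node set. -/
def leafLabels (Vt : Set (HNode Y)) : Set Y := {ℓ | HNode.node ℓ ∅ ∈ Vt}

/-- A candidate history/graph: a pair of a node set and an edge set. -/
abbrev Hist (Y : Type u) := Set (HNode Y) × Set (HNode Y × HNode Y)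

/-- The node set of the history sDAG constructed from the collection `T`. -/
def unionV (T : Set (Hist Y)) : Set (HNode Y) := ⋃ t ∈ T, t.1

/-- The edge set of the history sDAG constructed from the collection `T`. -/
def unionE (T : Set (Hist Y)) : Set (HNode Y × HNode Y) := ⋃ t ∈ T, t.2

/-- The node set of the complete history sDAG on labels `Y`. -/
def completeV (Y : Type u) : Set (HNode Y) :=
  {v | v = HNode.ua ∨ ∃ ℓ U, v = HNode.node ℓ U ∧ IsPart U}

/-- The edge set of the complete history sDAG on labels `Y`. -/
def completeE (Y : Type u) : Set (HNode Y × HNode Y) :=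
  {e | e.1 ∈ completeV Y ∧ e.2 ∈ completeV Y ∧ e.2 ≠ HNode.ua ∧
    (e.1 = HNode.ua ∨ ∃ ℓ U, e.1 = HNode.node ℓ U ∧ cladeUnion e.2 ∈ U)}

variable {W : Type v}

/-- The weight `g_f` of a subgraph with edge set `Es`: the sum of `f` over all edges. -/
noncomputable def gweight [AddCommMonoid W] (f : HNode Y × HNode Y → W)
    (Es : Set (HNode Y × HNode Y)) : W := ∑ᶠ e ∈ Es, f e

/-- The order is total on the subset `S` of `W`. -/
def TotalOn [PartialOrder W] (S : Set W) : Prop := ∀ a ∈ S, ∀ b ∈ S, a ≤ b ∨ b ≤ a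

/-- The order respects addition on the subset `S` of `W`. -/
def RespectsAdd [AddCommMonoid W] [PartialOrder W] (S : Set W) : Prop :=
  ∀ a ∈ S, ∀ b ∈ S, ∀ c : W, a < b ↔ a + c < b + c

/-- Weights of subhistories of `(V, E)` rooted at `v`. -/
def subWeights [AddCommMonoid W] (f : HNode Y × HNode Y → W)
    (V : Set (HNode Y)) (E : Set (HNode Y × HNode Y)) (v : HNode Y) : Set W :=
  {w | ∃ Vs Es, IsSubhistoryRooted V E Vs Es v ∧ w = gweight f Es}

/-- Weights of augmented subhistories below the node-clade pair `(v, C)`. -/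
def augWeights [AddCommMonoid W] (f : HNode Y × HNode Y → W)
    (V : Set (HNode Y)) (E : Set (HNode Y × HNode Y)) (v : HNode Y) (C : Set Y) : Set W :=
  {w | ∃ vc Vs Es, (v, vc) ∈ E ∧ cladeUnion vc = C ∧ IsSubhistoryRooted V E Vs Es vc ∧
    w = gweight f (insert (v, vc) Es)}

/-- Weights of histories in `(V, E)`. -/
def historyWeights [AddCommMonoid W] (f : HNode Y × HNode Y → W)
    (V : Set (HNode Y)) (E : Set (HNode Y × HNode Y)) : Set W :=
  {w | ∃ Vt Et, HistoryIn V E Vt Et ∧ w = gweight f Et}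

/-- `W` is clade-ordered with respect to `f` and `(V, E)`. -/
def CladeOrdered [AddCommMonoid W] [PartialOrder W] (f : HNode Y × HNode Y → W)
    (V : Set (HNode Y)) (E : Set (HNode Y × HNode Y)) : Prop :=
  (∀ v ∈ V, v ≠ HNode.ua →
      TotalOn (subWeights f V E v) ∧ RespectsAdd (subWeights f V E v)) ∧
  (∀ ℓ U, HNode.node ℓ U ∈ V → ∀ C ∈ U,
      TotalOn (augWeights f V E (HNode.node ℓ U) C) ∧
      RespectsAdd (augWeights f V E (HNode.node ℓ U) C)) ∧
  TotalOn (historyWeights f V E)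

/-- The minimum-weight histories in `(V, E)` with respect to `g_f`. -/
def minHistories [AddCommMonoid W] [PartialOrder W] (f : HNode Y × HNode Y → W)
    (V : Set (HNode Y)) (E : Set (HNode Y × HNode Y)) : Set (Hist Y) :=
  {t | HistoryIn V E t.1 t.2 ∧
    ∀ t' : Hist Y, HistoryIn V E t'.1 t'.2 → gweight f t.2 ≤ gweight f t'.2}

open Classical in
/-- The map `q` collapsing the edge `(vp, vc)`, sending both `vp` and `vc` to `vp'`. -/
noncomputable def collapseMap (vp vc vp' : HNode Y) (v : HNode Y) : HNode Y :=
  if v = vp ∨ v = vc then vp' else v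

/-- The history obtained by collapsing the edge `(vp, vc)` (into `vp'`) in `t`. -/
noncomputable def collapseEdgeHist (vp vc vp' : HNode Y) (t : Hist Y) : Hist Y :=
  (collapseMap vp vc vp' '' t.1,
   (fun e : HNode Y × HNode Y => (collapseMap vp vc vp' e.1, collapseMap vp vc vp' e.2)) ''
     (t.2 \ {(vp, vc)}))

/-- The new parent node `(ℓ_p, (U_p ∪ U_c) \ {CU(v_c)})` formed when collapsing an edge. -/
noncomputable def newParent : HNode Y → HNode Y → HNode Y
  | HNode.node ℓp Up, HNode.node ℓc Uc =>
      HNode.node ℓp ((Up ∪ Uc) \ {cladeUnion (HNode.node ℓc Uc)})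
  | v, _ => v

/-- `t'` results from `t` by collapsing one label-collapsible edge. -/
def LabelCollapseStep (t t' : Hist Y) : Prop :=
  ∃ ℓ Up Uc, (HNode.node ℓ Up, HNode.node ℓ Uc) ∈ t.2 ∧ Uc ≠ ∅ ∧
    t' = collapseEdgeHist (HNode.node ℓ Up) (HNode.node ℓ Uc)
        (newParent (HNode.node ℓ Up) (HNode.node ℓ Uc)) t

/-- `t` is label-collapsed: it has no label-collapsible edge. -/
def LabelCollapsed (t : Hist Y) : Prop :=
  ∀ ℓ Up Uc, (HNode.node ℓ Up, HNode.node ℓ Uc) ∈ t.2 → Uc = ∅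

/-- `(vp, vc)` is a label-collapsible edge of `G`. -/
def LabelCollapsibleEdge (G : Hist Y) (vp vc : HNode Y) : Prop :=
  (vp, vc) ∈ G.2 ∧ ∃ ℓ Up Uc, vp = HNode.node ℓ Up ∧ vc = HNode.node ℓ Uc ∧ Uc ≠ ∅

/-- `T` is a label-collapsible edge cover of `G`. -/
def LabelCollapsibleEdgeCover (G : Hist Y) (T : Set (Hist Y)) : Prop :=
  (∀ t ∈ T, HistoryIn G.1 G.2 t.1 t.2) ∧
  (∀ e ∈ G.2, ∃ t ∈ T, e ∈ t.2) ∧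
  (∀ vp vc, LabelCollapsibleEdge G vp vc →
    ∀ Vs Es, IsSubhistory G.1 G.2 Vs Es → (vp, vc) ∈ Es →
      ∃ t ∈ T, Vs ⊆ t.1 ∧ Es ⊆ t.2)

open Classical in
/-- Collapsing the edge `(vp, vc)` in the history sDAG `G`, via `E⁺`, `R`, `E⁻`, `E'`, `V'`. -/
noncomputable def collapseDAGEdge (vp vc : HNode Y) (G : Hist Y) : Hist Y :=
  let vp' := newParent vp vc
  let Eplus : Set (HNode Y × HNode Y) :=
    (G.2 ∪ {e | ∃ v, e = (v, vp') ∧ (v, vp) ∈ G.2}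
        ∪ {e | ∃ v, e = (vp', v) ∧ (vp, v) ∈ G.2 ∧ cladeUnion v ≠ cladeUnion vc}
        ∪ {e | ∃ v, e = (vp', v) ∧ (vc, v) ∈ G.2}) \ {(vp, vc)}
  let R : Set (HNode Y × HNode Y) :=
    if ∃ v, (vp, v) ∈ Eplus ∧ cladeUnion v = cladeUnion vc then ∅
    else {e ∈ Eplus | e.2 = vp}
  let Eminus := Eplus \ R
  let E' := {e ∈ Eminus | Reach Eminus HNode.ua e.1}
  ({v | ∃ e ∈ E', v = e.1 ∨ v = e.2}, E')

/-- `t'` is obtained from `t` by a subhistory swap, replacing a subhistory of `t` by a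
conforming subhistory of some history in `S`. -/
def SwapStepUsing (S : Set (Hist Y)) (t t' : Hist Y) : Prop :=
  ∃ t₂ ∈ S, ∃ Vs' Es' vr' vp,
    IsSubhistoryRooted t₂.1 t₂.2 Vs' Es' vr' ∧ (vp, vr') ∈ t₂.2 ∧
    ∃ Vs Es vr, IsSubhistoryRooted t.1 t.2 Vs Es vr ∧ (vp, vr) ∈ t.2 ∧
      leafLabels Vs = leafLabels Vs' ∧
      t' = ((t.1 \ Vs) ∪ Vs', (t.2 \ (Es ∪ {(vp, vr)})) ∪ (Es' ∪ {(vp, vr')}))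

/-- Leaves of an abstract rooted graph. -/
def IsLeafIn {α : Type v} (nodes : Set α) (edges : Set (α × α)) (x : α) : Prop :=
  x ∈ nodes ∧ ∀ c, (x, c) ∉ edges

/-- Reachability via directed edges in an abstract graph. -/
def GReach {α : Type v} (edges : Set (α × α)) (a b : α) : Prop :=
  Relation.ReflTransGen (fun x y => (x, y) ∈ edges) a b

/-- An (internally) labeled tree: a rooted multifurcating tree with no unifurcations,
with node labels in `Y` that are injective on leaves. -/
structure IsLabeledTree {α : Type v} (nodes : Set α) (edges : Set (α × α))
    (root : α) (lab : α → Y) : Prop where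
  root_mem : root ∈ nodes
  edge_mem : ∀ e ∈ edges, e.1 ∈ nodes ∧ e.2 ∈ nodes
  reach_root : ∀ x ∈ nodes, GReach edges root x
  unique_parent : ∀ x a b, (a, x) ∈ edges → (b, x) ∈ edges → a = b
  no_parent_root : ∀ a, (a, root) ∉ edges
  acyclic : ∀ x, ¬ Relation.TransGen (fun a b => (a, b) ∈ edges) x x
  no_unif : ∀ x ∈ nodes, ¬ (∃! c, (x, c) ∈ edges)
  leaf_inj : ∀ x y, IsLeafIn nodes edges x → IsLeafIn nodes edges y → lab x = lab y → x = y
  finite : nodes.Finite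

/-- The set `C_w` of leaf labels below a node `w` of an abstract labeled tree. -/
def leavesBelow {α : Type v} (nodes : Set α) (edges : Set (α × α)) (lab : α → Y) (w : α) :
    Set Y :=
  {y | ∃ u, IsLeafIn nodes edges u ∧ GReach edges w u ∧ y = lab u}

/-- The history sDAG node `v_w` associated to a node `w` of a labeled tree. -/
def treeNodeOf {α : Type v} (nodes : Set α) (edges : Set (α × α)) (lab : α → Y) (w : α) :
    HNode Y :=
  HNode.node (lab w) {C | ∃ w', (w, w') ∈ edges ∧ C = leavesBelow nodes edges lab w'}

/-- The node set `V_t` of the history associated to a labeled tree. -/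
def treeToHistV {α : Type v} (nodes : Set α) (edges : Set (α × α)) (lab : α → Y) :
    Set (HNode Y) :=
  insert HNode.ua (treeNodeOf nodes edges lab '' nodes)

/-- The edge set `E_t` of the history associated to a labeled tree. -/
def treeToHistE {α : Type v} (nodes : Set α) (edges : Set (α × α)) (root : α) (lab : α → Y) :
    Set (HNode Y × HNode Y) :=
  insert (HNode.ua, treeNodeOf nodes edges lab root)
    {e | ∃ w₁ w₂, (w₁, w₂) ∈ edges ∧
      e = (treeNodeOf nodes edges lab w₁, treeNodeOf nodes edges lab w₂)}

/-!
The trim is the union of all minimum-weight histories, together with `ρ`. Every minimum-weight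
history is a history in it; conversely, a history in the union weighs as much as a minimum-weight
history. For the latter, induct on clade unions: a subhistory made of edges of minimum-weight
histories weighs as much as the subhistory below the same node in any minimum-weight history `t`.
At a node-clade pair this compares two augmented subhistories taken from minimum-weight histories
`t` and `t'`. Swapping the one of `t'` into `t` gives again a history, so by minimality of `t`,
and because the order respects addition on augmented weights, the one of `t'` is not strictly
lighter; by symmetry and totality the two weigh the same.
-/

open Relation

lemma node_ne_ua {ℓ : Y} {U : Set (Set Y)} : HNode.node ℓ U ≠ HNode.ua := nofun

lemma exists_eq_node_of_ne_ua {v : HNode Y} (hv : v ≠ HNode.ua) :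
    ∃ ℓ U, v = HNode.node ℓ U := by
  cases v with
  | ua => exact absurd rfl hv
  | node ℓ U => exact ⟨ℓ, U, rfl⟩

lemma Reach.mono {Es Et : Set (HNode Y × HNode Y)} (hsub : Es ⊆ Et) {a b : HNode Y}
    (hr : Reach Es a b) : Reach Et a b :=
  ReflTransGen.mono (fun _ _ hxy => hsub hxy) _ _ hr

lemma IsPart.ssubset_cladeUnion {U : Set (Set Y)} (hP : IsPart U) (ℓ : Y) {C : Set Y}
    (hC : C ∈ U) : C ⊂ cladeUnion (HNode.node ℓ U) := by
  have hU : U ≠ ∅ := Set.nonempty_iff_ne_empty.mp ⟨C, hC⟩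
  simp only [cladeUnion, if_neg hU]
  obtain ⟨C', hC', hne⟩ : ∃ C' ∈ U, C' ≠ C := by
    by_contra! hall
    exact hP.2.2.1 C (Set.eq_singleton_iff_unique_mem.mpr ⟨hC, hall⟩)
  obtain ⟨y, hy⟩ := Set.nonempty_iff_ne_empty.mpr (hP.1 C' hC')
  exact ⟨Set.subset_sUnion_of_mem hC, fun hsup =>
    Set.disjoint_left.mp (hP.2.1 C' hC' C hC hne) hy (hsup ⟨C', hC', hy⟩)⟩

def UniqueChildPerClade (Et : Set (HNode Y × HNode Y)) : Prop :=
  ∀ p q₁ q₂, (p, q₁) ∈ Et → (p, q₂) ∈ Et → cladeUnion q₁ = cladeUnion q₂ → q₁ = q₂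

def edgesBelow (Et : Set (HNode Y × HNode Y)) (w : HNode Y) : Set (HNode Y × HNode Y) :=
  {e ∈ Et | Reach Et w e.1}

/-- The augmented subhistory `s^a` of the part `s` of `Et` below `c`. -/
def augEdgesBelow (Et : Set (HNode Y × HNode Y)) (a c : HNode Y) : Set (HNode Y × HNode Y) :=
  insert (a, c) (edgesBelow Et c)

namespace IsHSDAG

variable {V : Set (HNode Y)} {E : Set (HNode Y × HNode Y)} {Et : Set (HNode Y × HNode Y)}

lemma snd_ne_ua (h : IsHSDAG V E) {a b : HNode Y} (hab : (a, b) ∈ E) : b ≠ HNode.ua :=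
  fun hb => h.no_in_ua a (hb ▸ hab)

lemma cladeUnion_nonempty (h : IsHSDAG V E) {v : HNode Y} (hv : v ∈ V)
    (hne : v ≠ HNode.ua) : (cladeUnion v).Nonempty := by
  obtain ⟨ℓ, U, rfl⟩ := exists_eq_node_of_ne_ua hne
  by_cases hU : U = ∅
  · simp [cladeUnion, hU]
  · obtain ⟨C, hC⟩ := Set.nonempty_iff_ne_empty.mpr hU
    exact (Set.nonempty_iff_ne_empty.mpr ((h.valid ℓ U hv).1 C hC)).mono
      ((h.valid ℓ U hv).ssubset_cladeUnion ℓ hC).1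

lemma cladeUnion_finite (h : IsHSDAG V E) {v : HNode Y} (hv : v ∈ V) :
    (cladeUnion v).Finite := by
  cases v with
  | ua => simp [cladeUnion]
  | node ℓ U =>
    by_cases hU : U = ∅
    · simp [cladeUnion, hU]
    · simp only [cladeUnion, if_neg hU]
      exact (h.valid ℓ U hv).2.2.2.1.sUnion (h.valid ℓ U hv).2.2.2.2

lemma cladeUnion_ssubset (h : IsHSDAG V E) {a b : HNode Y} (hab : (a, b) ∈ E)
    (ha : a ≠ HNode.ua) : cladeUnion b ⊂ cladeUnion a := by
  obtain ⟨ℓ, U, rfl⟩ := exists_eq_node_of_ne_ua ha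
  exact (h.valid ℓ U (h.edge_mem _ hab).1).ssubset_cladeUnion ℓ (h.edge_clade ℓ U b hab)

lemma mem_of_reach (h : IsHSDAG V E) (hEt : Et ⊆ E) {x u : HNode Y} (hx : x ∈ V)
    (hr : Reach Et x u) : u ∈ V := by
  induction hr with
  | refl => exact hx
  | tail _ he _ => exact (h.edge_mem _ (hEt he)).2

lemma ne_ua_of_reach (h : IsHSDAG V E) (hEt : Et ⊆ E) {x u : HNode Y} (hx : x ≠ HNode.ua)
    (hr : Reach Et x u) : u ≠ HNode.ua := by
  induction hr with
  | refl => exact hx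
  | tail _ he _ => exact h.snd_ne_ua (hEt he)

lemma cladeUnion_subset_of_reach (h : IsHSDAG V E) (hEt : Et ⊆ E) {x u : HNode Y}
    (hx : x ≠ HNode.ua) (hr : Reach Et x u) : cladeUnion u ⊆ cladeUnion x := by
  induction hr with
  | refl => exact subset_rfl
  | @tail z u hz he ih =>
    exact (h.cladeUnion_ssubset (hEt he) (h.ne_ua_of_reach hEt hx hz)).1.trans ih

lemma eq_of_reach_of_cladeUnion_subset (h : IsHSDAG V E) (hEt : Et ⊆ E) {a w : HNode Y}
    (ha : a ≠ HNode.ua) (hr : Reach Et a w) (hsub : cladeUnion a ⊆ cladeUnion w) : a = w := by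
  rcases hr.cases_head with heq | ⟨c, hac, hcw⟩
  · exact heq
  · have hcw' := h.cladeUnion_subset_of_reach hEt (h.snd_ne_ua (hEt hac)) hcw
    exact absurd (hsub.trans hcw') (h.cladeUnion_ssubset (hEt hac) ha).not_superset

lemma not_reach_of_mem (h : IsHSDAG V E) (hEt : Et ⊆ E) {a c : HNode Y} (hac : (a, c) ∈ E)
    (ha : a ≠ HNode.ua) : ¬ Reach Et c a := fun hr =>
  (h.cladeUnion_ssubset hac ha).not_superset
    (h.cladeUnion_subset_of_reach hEt (h.snd_ne_ua hac) hr)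

lemma reach_or_reach_of_inter (h : IsHSDAG V E) (hEt : Et ⊆ E) (hinj : UniqueChildPerClade Et)
    {x a w : HNode Y} (hx : x ≠ HNode.ua) (hra : Reach Et x a) (hrw : Reach Et x w)
    (hint : (cladeUnion a ∩ cladeUnion w).Nonempty) : Reach Et a w ∨ Reach Et w a := by
  induction hra using ReflTransGen.head_induction_on with
  | refl => exact Or.inl hrw
  | @head x c hxc hca ih =>
    rcases hrw.cases_head with rfl | ⟨d, hxd, hdw⟩
    · exact Or.inr (hca.head hxc)
    have hcne := h.snd_ne_ua (hEt hxc)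
    obtain rfl : c = d := by
      obtain ⟨ℓ, U, rfl⟩ := exists_eq_node_of_ne_ua hx
      refine hinj _ _ _ hxc hxd (by_contra fun hne => ?_)
      obtain ⟨y, hya, hyw⟩ := hint
      exact Set.disjoint_left.mp
        ((h.valid ℓ U (h.edge_mem _ (hEt hxc)).1).2.1 _ (h.edge_clade ℓ U c (hEt hxc)) _
          (h.edge_clade ℓ U d (hEt hxd)) hne)
        (h.cladeUnion_subset_of_reach hEt hcne hca hya)
        (h.cladeUnion_subset_of_reach hEt (h.snd_ne_ua (hEt hxd)) hdw hyw)
    exact ih hcne hdw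

lemma reach_of_cladeUnion_subset (h : IsHSDAG V E) (hEt : Et ⊆ E)
    (hinj : UniqueChildPerClade Et) {x a w : HNode Y} (hx : x ≠ HNode.ua)
    (hra : Reach Et x a) (hrw : Reach Et x w) (hsub : cladeUnion a ⊆ cladeUnion w)
    (hne : (cladeUnion a).Nonempty) : Reach Et w a := by
  have hint : (cladeUnion a ∩ cladeUnion w).Nonempty := by
    rwa [Set.inter_eq_self_of_subset_left hsub]
  rcases h.reach_or_reach_of_inter hEt hinj hx hra hrw hint with haw | hwa
  · have hane : a ≠ HNode.ua := by rintro rfl; simp [cladeUnion] at hne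
    obtain rfl := h.eq_of_reach_of_cladeUnion_subset hEt hane haw hsub
    exact ReflTransGen.refl
  · exact hwa

lemma eq_of_reach_of_mem_of_mem (h : IsHSDAG V E) (hEt : Et ⊆ E) {p q w : HNode Y}
    (hr : Reach Et p q) (hp : (p, w) ∈ Et) (hq : (q, w) ∈ Et) (hpne : p ≠ HNode.ua)
    (hqne : q ≠ HNode.ua) : p = q := by
  rcases hr.cases_head with heq | ⟨c, hpc, hcq⟩
  · exact heq
  obtain ⟨ℓ, U, rfl⟩ := exists_eq_node_of_ne_ua hpne
  have hwq := h.cladeUnion_ssubset (hEt hq) hqne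
  have hqc := h.cladeUnion_subset_of_reach hEt (h.snd_ne_ua (hEt hpc)) hcq
  have hdisj := (h.valid ℓ U (h.edge_mem _ (hEt hp)).1).2.1 _ (h.edge_clade ℓ U w (hEt hp))
    _ (h.edge_clade ℓ U c (hEt hpc)) (fun hwc => hwq.not_superset (hwc ▸ hqc))
  obtain ⟨y, hy⟩ := h.cladeUnion_nonempty (h.edge_mem _ (hEt hp)).2 (h.snd_ne_ua (hEt hp))
  exact absurd (hqc (hwq.1 hy)) (Set.disjoint_left.mp hdisj hy)

lemma parent_unique (h : IsHSDAG V E) (hEt : Et ⊆ E) (hinj : UniqueChildPerClade Et)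
    {x p q w : HNode Y} (hx : x ≠ HNode.ua) (hrp : Reach Et x p) (hrq : Reach Et x q)
    (hp : (p, w) ∈ Et) (hq : (q, w) ∈ Et) (hpne : p ≠ HNode.ua) (hqne : q ≠ HNode.ua) :
    p = q := by
  have hint : (cladeUnion p ∩ cladeUnion q).Nonempty :=
    (h.cladeUnion_nonempty (h.edge_mem _ (hEt hp)).2 (h.snd_ne_ua (hEt hp))).mono
      (Set.subset_inter (h.cladeUnion_ssubset (hEt hp) hpne).1
        (h.cladeUnion_ssubset (hEt hq) hqne).1)
  rcases h.reach_or_reach_of_inter hEt hinj hx hrp hrq hint with hpq | hqp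
  · exact h.eq_of_reach_of_mem_of_mem hEt hpq hp hq hpne hqne
  · exact (h.eq_of_reach_of_mem_of_mem hEt hqp hq hp hqne hpne).symm

/-- Below a node, a node is determined by its clade union, so there are finitely many. -/
lemma finite_reach (h : IsHSDAG V E) (hEt : Et ⊆ E) (hinj : UniqueChildPerClade Et)
    {r : HNode Y} (hr : r ∈ V) (hrne : r ≠ HNode.ua) : {u | Reach Et r u}.Finite := by
  refine Set.Finite.of_finite_image (f := cladeUnion)
    ((h.cladeUnion_finite hr).finite_subsets.subset ?_) ?_
  · rintro _ ⟨u, hu, rfl⟩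
    exact h.cladeUnion_subset_of_reach hEt hrne hu
  · intro u hu u' hu' hcu
    have hune := h.ne_ua_of_reach hEt hrne hu
    have hne : (cladeUnion u').Nonempty :=
      hcu ▸ h.cladeUnion_nonempty (h.mem_of_reach hEt hr hu) hune
    exact h.eq_of_reach_of_cladeUnion_subset hEt hune
      (h.reach_of_cladeUnion_subset hEt hinj hrne hu' hu hcu.ge hne) hcu.le

lemma finite_edgesBelow (h : IsHSDAG V E) (hEt : Et ⊆ E) (hinj : UniqueChildPerClade Et)
    {r : HNode Y} (hr : r ∈ V) (hrne : r ≠ HNode.ua) : (edgesBelow Et r).Finite := by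
  have hfin := h.finite_reach hEt hinj hr hrne
  exact (hfin.prod hfin).subset fun e he => ⟨he.2, he.2.tail he.1⟩

lemma exists_child_fun (h : IsHSDAG V E) (hEt : Et ⊆ E) {ℓ : Y} {U : Set (Set Y)}
    (hud : ∀ C ∈ U, ∃! c, (HNode.node ℓ U, c) ∈ Et ∧ cladeUnion c = C) :
    ∃ w : Set Y → HNode Y, (∀ c, (HNode.node ℓ U, c) ∈ Et ↔ ∃ C ∈ U, c = w C) ∧
      ∀ C ∈ U, cladeUnion (w C) = C := by
  have : Nonempty (HNode Y) := ⟨HNode.ua⟩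
  choose! w hw huniq using hud
  refine ⟨w, fun c => ⟨fun hc => ?_, ?_⟩, fun C hC => (hw C hC).2⟩
  · have hC := h.edge_clade ℓ U c (hEt hc)
    exact ⟨_, hC, huniq _ hC c ⟨hc, rfl⟩⟩
  · rintro ⟨C, hC, rfl⟩
    exact (hw C hC).1

lemma disjoint_augEdgesBelow (h : IsHSDAG V E) (hEt : Et ⊆ E) {b c c' : HNode Y}
    (hb : b ≠ HNode.ua) (hc : (b, c) ∈ Et) (hc' : (b, c') ∈ Et)
    (hne : cladeUnion c ≠ cladeUnion c') :
    Disjoint (augEdgesBelow Et b c) (augEdgesBelow Et b c') := by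
  obtain ⟨ℓ, U, rfl⟩ := exists_eq_node_of_ne_ua hb
  have hdisj := (h.valid ℓ U (h.edge_mem _ (hEt hc)).1).2.1 _ (h.edge_clade ℓ U c (hEt hc)) _
    (h.edge_clade ℓ U c' (hEt hc')) hne
  rw [Set.disjoint_left]
  rintro e (rfl | ⟨he, hr⟩) (he' | ⟨-, hr'⟩)
  · exact hne (congrArg cladeUnion (Prod.ext_iff.mp he').2)
  · exact h.not_reach_of_mem hEt (hEt hc') hb hr'
  · exact h.not_reach_of_mem hEt (hEt hc) hb (by rw [he'] at hr; exact hr)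
  · have hcne := h.snd_ne_ua (hEt hc)
    obtain ⟨y, hy⟩ :=
      h.cladeUnion_nonempty (h.edge_mem _ (hEt he)).1 (h.ne_ua_of_reach hEt hcne hr)
    exact Set.disjoint_left.mp hdisj (h.cladeUnion_subset_of_reach hEt hcne hr hy)
      (h.cladeUnion_subset_of_reach hEt (h.snd_ne_ua (hEt hc')) hr' hy)

end IsHSDAG

lemma mem_augEdgesBelow {Et : Set (HNode Y × HNode Y)} {a c : HNode Y} {e : HNode Y × HNode Y} :
    e ∈ augEdgesBelow Et a c ↔ e = (a, c) ∨ e ∈ edgesBelow Et c := Iff.rfl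

lemma edgesBelow_subset (Et : Set (HNode Y × HNode Y)) (w : HNode Y) : edgesBelow Et w ⊆ Et :=
  Set.sep_subset _ _

lemma edgesBelow_eq_biUnion {Et : Set (HNode Y × HNode Y)} {b : HNode Y} {U : Set (Set Y)}
    {w : Set Y → HNode Y} (hout : ∀ c, (b, c) ∈ Et ↔ ∃ C ∈ U, c = w C) :
    edgesBelow Et b = ⋃ C ∈ U, augEdgesBelow Et b (w C) := by
  ext e
  simp only [Set.mem_iUnion₂, exists_prop, mem_augEdgesBelow]
  constructor
  · rintro ⟨he, hr⟩
    rcases hr.cases_head with hb | ⟨c, hbc, hce⟩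
    · have hbe : (b, e.2) ∈ Et := by rw [hb]; exact he
      obtain ⟨C, hC, hc⟩ := (hout e.2).1 hbe
      exact ⟨C, hC, Or.inl (Prod.ext hb.symm hc)⟩
    · obtain ⟨C, hC, rfl⟩ := (hout c).1 hbc
      exact ⟨C, hC, Or.inr ⟨he, hce⟩⟩
  · rintro ⟨C, hC, rfl | ⟨he, hr⟩⟩
    · exact ⟨(hout _).2 ⟨C, hC, rfl⟩, ReflTransGen.refl⟩
    · exact ⟨he, (ReflTransGen.single ((hout _).2 ⟨C, hC, rfl⟩)).trans hr⟩

lemma reach_sdiff_augEdgesBelow {Et : Set (HNode Y × HNode Y)} {a c x u : HNode Y}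
    (hr : Reach Et x u) (hu : ¬ Reach Et c u) : Reach (Et \ augEdgesBelow Et a c) x u := by
  induction hr with
  | refl => exact ReflTransGen.refl
  | @tail z u hz he ih =>
    have hcz : ¬ Reach Et c z := fun hcz => hu (hcz.tail he)
    refine (ih hcz).tail ⟨he, ?_⟩
    rintro (hzu | hzu)
    · obtain ⟨-, rfl⟩ := Prod.mk.inj hzu
      exact hu ReflTransGen.refl
    · exact hcz hzu.2

lemma isSubhistoryRooted_edgesBelow {V' : Set (HNode Y)} {E' : Set (HNode Y × HNode Y)}
    {Vs : Set (HNode Y)} {Es : Set (HNode Y × HNode Y)} (hVs : Vs ⊆ V') (hEs : Es ⊆ E')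
    (hmem : ∀ e ∈ Es, e.1 ∈ Vs ∧ e.2 ∈ Vs) (hud : UniqueDesc Vs Es)
    (hnua : ∀ x, (x, HNode.ua) ∉ Es) {w : HNode Y} (hw : w ∈ Vs) (hwne : w ≠ HNode.ua) :
    IsSubhistoryRooted V' E' {u | Reach Es w u} (edgesBelow Es w) w := by
  have hbelow : {u | Reach Es w u} ⊆ Vs := fun u hu => by
    induction hu with
    | refl => exact hw
    | tail _ he _ => exact (hmem _ he).2
  refine ⟨hbelow.trans hVs, (edgesBelow_subset Es w).trans hEs, fun hua => ?_,
    fun e he => ⟨he.2, he.2.tail he.1⟩, ReflTransGen.refl, fun v hv => ?_, ?_⟩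
  · rcases (show Reach Es w HNode.ua from hua).cases_tail with heq | ⟨z, _, hz⟩
    · exact hwne heq.symm
    · exact hnua z hz
  · induction (show Reach Es w v from hv) with
    | refl => exact ReflTransGen.refl
    | @tail z u hz he ih => exact (ih hz).tail ⟨he, hz⟩
  · intro ℓ U hU C hC
    obtain ⟨vc, ⟨h1, h2⟩, huniq⟩ := hud ℓ U (hbelow hU) C hC
    exact ⟨vc, ⟨⟨h1, hU⟩, h2⟩, fun y hy => huniq y ⟨hy.1.1, hy.2⟩⟩

namespace IsHistory

variable {Vt : Set (HNode Y)} {Et : Set (HNode Y × HNode Y)}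

lemma uniqueChildPerClade (ht : IsHistory Vt Et) : UniqueChildPerClade Et := by
  intro p q₁ q₂ h1 h2 hcu
  cases p with
  | ua =>
    obtain ⟨v, _, hv⟩ := ht.2.1
    rw [hv q₁ h1, hv q₂ h2]
  | node ℓ U =>
    obtain ⟨vc, _, hvc⟩ :=
      ht.2.2 ℓ U (ht.1.edge_mem _ h1).1 _ (ht.1.edge_clade ℓ U q₁ h1)
    rw [hvc q₁ ⟨h1, rfl⟩, hvc q₂ ⟨h2, hcu.symm⟩]

lemma reach_root (ht : IsHistory Vt Et) {r : HNode Y} (hr : (HNode.ua, r) ∈ Et)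
    {u : HNode Y} (hu : u ∈ Vt) (hune : u ≠ HNode.ua) : Reach Et r u := by
  rcases (ht.1.reach_ua u hu).cases_head with heq | ⟨c, hc, hcu⟩
  · exact absurd heq.symm hune
  · obtain ⟨v, _, hv⟩ := ht.2.1
    rwa [hv r hr, ← hv c hc]

lemma eq_augEdgesBelow_root (ht : IsHistory Vt Et) {r : HNode Y} (hr : (HNode.ua, r) ∈ Et) :
    Et = augEdgesBelow Et HNode.ua r := by
  obtain ⟨v, _, hv⟩ := ht.2.1
  ext e
  refine ⟨fun he => ?_, fun he => he.elim (· ▸ hr) (·.1)⟩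
  rcases (ht.1.reach_ua e.1 (ht.1.edge_mem e he).1).cases_head with h1 | ⟨c, hc, hce⟩
  · have he' : (HNode.ua, e.2) ∈ Et := by rw [h1]; exact he
    exact Or.inl (Prod.ext h1.symm (by rw [hv _ he', hv r hr]))
  · exact Or.inr ⟨he, by rwa [hv r hr, ← hv c hc]⟩

lemma finite_edges (ht : IsHistory Vt Et) : Et.Finite := by
  obtain ⟨r, hr, -⟩ := ht.2.1
  rw [ht.eq_augEdgesBelow_root hr]
  exact (ht.1.finite_edgesBelow subset_rfl ht.uniqueChildPerClade (ht.1.edge_mem _ hr).2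
    (ht.1.snd_ne_ua hr)).insert _

lemma parent_unique (ht : IsHistory Vt Et) {p q w : HNode Y} (hp : (p, w) ∈ Et)
    (hq : (q, w) ∈ Et) (hpne : p ≠ HNode.ua) (hqne : q ≠ HNode.ua) : p = q := by
  obtain ⟨r, hr, -⟩ := ht.2.1
  exact ht.1.parent_unique subset_rfl ht.uniqueChildPerClade (ht.1.snd_ne_ua hr)
    (ht.reach_root hr (ht.1.edge_mem _ hp).1 hpne) (ht.reach_root hr (ht.1.edge_mem _ hq).1 hqne)
    hp hq hpne hqne

lemma reach_of_cladeUnion_subset (ht : IsHistory Vt Et) {c u : HNode Y} (hc : c ∈ Vt)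
    (hcne : c ≠ HNode.ua) (hu : u ∈ Vt) (hune : u ≠ HNode.ua)
    (hsub : cladeUnion u ⊆ cladeUnion c) : Reach Et c u := by
  obtain ⟨r, hr, -⟩ := ht.2.1
  exact ht.1.reach_of_cladeUnion_subset subset_rfl ht.uniqueChildPerClade (ht.1.snd_ne_ua hr)
    (ht.reach_root hr hu hune) (ht.reach_root hr hc hcne) hsub
    (ht.1.cladeUnion_nonempty hu hune)

lemma mem_augEdgesBelow_of_reach (ht : IsHistory Vt Et) {a c₀ : HNode Y} (hac : (a, c₀) ∈ Et)
    (ha : a ≠ HNode.ua) {e : HNode Y × HNode Y} (he : e ∈ Et) (hr : Reach Et c₀ e.2) :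
    e ∈ augEdgesBelow Et a c₀ := by
  obtain ⟨r, hr₀, hv⟩ := ht.2.1
  have h1ne : e.1 ≠ HNode.ua := by
    intro h1
    have he2 : e.2 = r := hv _ (by rw [← h1]; exact he)
    exact ht.1.not_reach_of_mem subset_rfl hac ha
      (hr.trans (he2 ▸ ht.reach_root hr₀ (ht.1.edge_mem _ hac).1 ha))
  rcases hr.cases_tail with h2 | ⟨z, hz, hze⟩
  · have he' : (e.1, c₀) ∈ Et := by rw [← h2]; exact he
    exact Or.inl (Prod.ext (ht.parent_unique he' hac h1ne ha) h2)
  · have hez : e.1 = z := ht.parent_unique he hze h1ne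
      (ht.1.ne_ua_of_reach subset_rfl (ht.1.snd_ne_ua hac) hz)
    exact Or.inr ⟨he, by rw [hez]; exact hz⟩

end IsHistory

lemma HistoryIn.mono {V V' Vt : Set (HNode Y)} {E E' Et : Set (HNode Y × HNode Y)}
    (ht : HistoryIn V E Vt Et) (hV : V ⊆ V') (hE : E ⊆ E') : HistoryIn V' E' Vt Et :=
  ⟨ht.1.trans hV, ht.2.1.trans hE, ht.2.2⟩

lemma HistoryIn.isSubhistoryRooted_edgesBelow {V Vt : Set (HNode Y)}
    {E Et : Set (HNode Y × HNode Y)} (ht : HistoryIn V E Vt Et) {w : HNode Y} (hw : w ∈ Vt)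
    (hwne : w ≠ HNode.ua) :
    IsSubhistoryRooted V E {u | Reach Et w u} (edgesBelow Et w) w :=
  HistorySDAGs.isSubhistoryRooted_edgesBelow ht.1 ht.2.1 ht.2.2.1.edge_mem ht.2.2.2.2
    ht.2.2.1.no_in_ua hw hwne

namespace IsSubhistoryRooted

variable {V Vs : Set (HNode Y)} {E Es : Set (HNode Y × HNode Y)} {vr : HNode Y}

lemma isSubhistoryRooted_edgesBelow (s : IsSubhistoryRooted V E Vs Es vr) {w : HNode Y}
    (hw : w ∈ Vs) : IsSubhistoryRooted V E {u | Reach Es w u} (edgesBelow Es w) w :=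
  HistorySDAGs.isSubhistoryRooted_edgesBelow s.subV s.subE s.edge_mem s.unique_desc
    (fun _ hx => s.ua_not_mem (s.edge_mem _ hx).2) hw (fun hc => s.ua_not_mem (hc ▸ hw))

lemma edgesBelow_root (s : IsSubhistoryRooted V E Vs Es vr) : edgesBelow Es vr = Es :=
  Set.Subset.antisymm (edgesBelow_subset Es vr)
    fun e he => ⟨he, s.reach_root _ (s.edge_mem e he).1⟩

lemma uniqueChildPerClade (h : IsHSDAG V E) (s : IsSubhistoryRooted V E Vs Es vr) :
    UniqueChildPerClade Es := by
  intro p q₁ q₂ h1 h2 hcu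
  have hp : p ∈ Vs := (s.edge_mem _ h1).1
  obtain ⟨ℓ, U, rfl⟩ := exists_eq_node_of_ne_ua fun hc : p = HNode.ua => s.ua_not_mem (hc ▸ hp)
  obtain ⟨vc, _, hvc⟩ := s.unique_desc ℓ U hp _ (h.edge_clade ℓ U q₁ (s.subE h1))
  rw [hvc q₁ ⟨h1, rfl⟩, hvc q₂ ⟨h2, hcu.symm⟩]

lemma finite_edges (h : IsHSDAG V E) (s : IsSubhistoryRooted V E Vs Es vr) : Es.Finite :=
  s.edgesBelow_root ▸ h.finite_edgesBelow s.subE (s.uniqueChildPerClade h) (s.subV s.root_mem)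
    fun hc => s.ua_not_mem (hc ▸ s.root_mem)

end IsSubhistoryRooted

section Weight

variable {W : Type v} [AddCommMonoid W] (f : HNode Y × HNode Y → W)

lemma gweight_union {s t : Set (HNode Y × HNode Y)} (hd : Disjoint s t) (hs : s.Finite)
    (ht : t.Finite) : gweight f (s ∪ t) = gweight f s + gweight f t :=
  finsum_mem_union hd hs ht

lemma gweight_eq_sdiff_add {s t : Set (HNode Y × HNode Y)} (hst : s ⊆ t) (ht : t.Finite) :
    gweight f t = gweight f (t \ s) + gweight f s := by
  conv_lhs => rw [← Set.sdiff_union_of_subset hst]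
  exact gweight_union f disjoint_sdiff_self_left ht.sdiff (ht.subset hst)

lemma gweight_augEdgesBelow {Et : Set (HNode Y × HNode Y)} {a c : HNode Y}
    (hca : ¬ Reach Et c a) (hfin : (edgesBelow Et c).Finite) :
    gweight f (augEdgesBelow Et a c) = f (a, c) + gweight f (edgesBelow Et c) :=
  finsum_mem_insert f (fun he => hca he.2) hfin

lemma IsHistory.gweight_eq {Vt : Set (HNode Y)} {Et : Set (HNode Y × HNode Y)}
    (ht : IsHistory Vt Et) {r : HNode Y} (hr : (HNode.ua, r) ∈ Et) :
    gweight f Et = f (HNode.ua, r) + gweight f (edgesBelow Et r) := by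
  conv_lhs => rw [ht.eq_augEdgesBelow_root hr]
  exact gweight_augEdgesBelow f
    (fun hr' => ht.1.ne_ua_of_reach subset_rfl (ht.1.snd_ne_ua hr) hr' rfl)
    (ht.finite_edges.subset (edgesBelow_subset Et r))

lemma IsHSDAG.gweight_edgesBelow_eq_finsum {V : Set (HNode Y)} {E Et : Set (HNode Y × HNode Y)}
    (h : IsHSDAG V E) (hEt : Et ⊆ E) {ℓ : Y} {U : Set (Set Y)} (hb : HNode.node ℓ U ∈ V)
    (hfin : (edgesBelow Et (HNode.node ℓ U)).Finite) {w : Set Y → HNode Y}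
    (hout : ∀ c, (HNode.node ℓ U, c) ∈ Et ↔ ∃ C ∈ U, c = w C)
    (hw : ∀ C ∈ U, cladeUnion (w C) = C) :
    gweight f (edgesBelow Et (HNode.node ℓ U)) =
      ∑ᶠ C ∈ U, gweight f (augEdgesBelow Et (HNode.node ℓ U) (w C)) := by
  rw [edgesBelow_eq_biUnion hout] at hfin ⊢
  refine finsum_mem_biUnion (fun C hC C' hC' hne => ?_) (h.valid ℓ U hb).2.2.2.1
    fun C hC => hfin.subset (Set.subset_biUnion_of_mem (u := fun C => augEdgesBelow Et _ (w C)) hC)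
  exact h.disjoint_augEdgesBelow hEt node_ne_ua ((hout _).2 ⟨C, hC, rfl⟩)
    ((hout _).2 ⟨C', hC', rfl⟩) (by rwa [hw C hC, hw C' hC'])

lemma HistoryIn.gweight_augEdgesBelow_mem {V Vt : Set (HNode Y)}
    {E Et : Set (HNode Y × HNode Y)} (ht : HistoryIn V E Vt Et) {a c : HNode Y}
    (hac : (a, c) ∈ Et) :
    gweight f (augEdgesBelow Et a c) ∈ augWeights f V E a (cladeUnion c) :=
  ⟨c, _, _, ht.2.1 hac, rfl,
    ht.isSubhistoryRooted_edgesBelow (ht.2.2.1.edge_mem _ hac).2 (ht.2.2.1.snd_ne_ua hac), rfl⟩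

end Weight

/-- The edge set of the subhistory swap at the edge `(a, c₀)`. -/
def swapEdges (Et : Set (HNode Y × HNode Y)) (a c₀ c' : HNode Y)
    (Es' : Set (HNode Y × HNode Y)) : Set (HNode Y × HNode Y) :=
  (Et \ augEdgesBelow Et a c₀) ∪ insert (a, c') Es'

section Swap

variable {V Vt Vs' : Set (HNode Y)} {E Et Es' : Set (HNode Y × HNode Y)} {a c₀ c' : HNode Y}

lemma reach_of_mem_subhistory (h : IsHSDAG V E) (ht : IsHistory Vt Et) (hac : (a, c₀) ∈ Et)
    (s' : IsSubhistoryRooted V E Vs' Es' c') (hcu : cladeUnion c' = cladeUnion c₀)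
    {u : HNode Y} (hu : u ∈ Vs') (huVt : u ∈ Vt) : Reach Et c₀ u := by
  have hune : u ≠ HNode.ua := fun hc => s'.ua_not_mem (hc ▸ hu)
  have hc'ne : c' ≠ HNode.ua := fun hc => s'.ua_not_mem (hc ▸ s'.root_mem)
  exact ht.reach_of_cladeUnion_subset (ht.1.edge_mem _ hac).2 (ht.1.snd_ne_ua hac) huVt hune
    (hcu ▸ h.cladeUnion_subset_of_reach s'.subE hc'ne (s'.reach_root u hu))

lemma disjoint_sdiff_augEdgesBelow (h : IsHSDAG V E) (ht : IsHistory Vt Et)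
    (hac : (a, c₀) ∈ Et) (s' : IsSubhistoryRooted V E Vs' Es' c')
    (hcu : cladeUnion c' = cladeUnion c₀) :
    Disjoint (Et \ augEdgesBelow Et a c₀) (insert (a, c') Es') := by
  rw [Set.disjoint_left]
  rintro e ⟨he, hnot⟩ (rfl | he')
  · exact hnot (Or.inl (by rw [ht.uniqueChildPerClade _ _ _ he hac hcu]))
  · exact hnot (Or.inr ⟨he, reach_of_mem_subhistory h ht hac s' hcu (s'.edge_mem _ he').1
      (ht.1.edge_mem _ he).1⟩)

lemma mem_swapEdges_iff_of_mem (h : IsHSDAG V E) (ht : IsHistory Vt Et) (hac : (a, c₀) ∈ Et)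
    (ha : a ≠ HNode.ua) (s' : IsSubhistoryRooted V E Vs' Es' c')
    (hcu : cladeUnion c' = cladeUnion c₀) {u : HNode Y} (hu : u ∈ Vs') (v : HNode Y) :
    (u, v) ∈ swapEdges Et a c₀ c' Es' ↔ (u, v) ∈ Es' := by
  refine ⟨?_, fun he => Or.inr (Or.inr he)⟩
  rintro (⟨he, hnot⟩ | he | he)
  · exact absurd (Or.inr ⟨he, reach_of_mem_subhistory h ht hac s' hcu hu (ht.1.edge_mem _ he).1⟩)
      hnot
  · obtain ⟨rfl, -⟩ := Prod.mk.inj he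
    exact absurd (reach_of_mem_subhistory h ht hac s' hcu hu (ht.1.edge_mem _ hac).1)
      (ht.1.not_reach_of_mem subset_rfl hac ha)
  · exact he

lemma mem_swapEdges_iff_of_not_reach (h : IsHSDAG V E) (ht : IsHistory Vt Et)
    (hac : (a, c₀) ∈ Et) (s' : IsSubhistoryRooted V E Vs' Es' c')
    (hcu : cladeUnion c' = cladeUnion c₀) {u : HNode Y} (hu : u ∈ Vt) (hnr : ¬ Reach Et c₀ u)
    (v : HNode Y) :
    (u, v) ∈ swapEdges Et a c₀ c' Es' ↔ ((u, v) ∈ Et ∧ (u, v) ≠ (a, c₀)) ∨ (u, v) = (a, c') := by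
  constructor
  · rintro (⟨he, hnot⟩ | he | he)
    · exact Or.inl ⟨he, fun heq => hnot (Or.inl heq)⟩
    · exact Or.inr he
    · exact absurd (reach_of_mem_subhistory h ht hac s' hcu (s'.edge_mem _ he).1 hu) hnr
  · rintro (⟨he, hne⟩ | he)
    · exact Or.inl ⟨he, fun hmem => hmem.elim hne fun hb => hnr hb.2⟩
    · exact Or.inr (Or.inl he)

lemma mem_or_mem_of_reach_swapEdges (ht : IsHistory Vt Et) (hac : (a, c₀) ∈ Et)
    (ha : a ≠ HNode.ua) (s' : IsSubhistoryRooted V E Vs' Es' c') {u : HNode Y}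
    (hu : Reach (swapEdges Et a c₀ c' Es') HNode.ua u) :
    u = HNode.ua ∨ (u ∈ Vt ∧ ¬ Reach Et c₀ u) ∨ u ∈ Vs' := by
  induction hu with
  | refl => exact Or.inl rfl
  | tail _ he _ =>
    rcases he with ⟨he, hnot⟩ | he | he
    · exact Or.inr (Or.inl ⟨(ht.1.edge_mem _ he).2,
        fun hr => hnot (ht.mem_augEdgesBelow_of_reach hac ha he hr)⟩)
    · exact Or.inr (Or.inr ((Prod.mk.inj he).2 ▸ s'.root_mem))
    · exact Or.inr (Or.inr (s'.edge_mem _ he).2)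

lemma uniqueDesc_swapEdges (h : IsHSDAG V E) (ht : IsHistory Vt Et) (hac : (a, c₀) ∈ Et)
    (ha : a ≠ HNode.ua) (s' : IsSubhistoryRooted V E Vs' Es' c')
    (hcu : cladeUnion c' = cladeUnion c₀) :
    UniqueDesc {u | Reach (swapEdges Et a c₀ c' Es') HNode.ua u} (swapEdges Et a c₀ c' Es') := by
  intro ℓ U hu C hC
  rcases mem_or_mem_of_reach_swapEdges ht hac ha s' hu with hua | ⟨huVt, hnr⟩ | hus
  · exact absurd hua node_ne_ua
  · simp_rw [mem_swapEdges_iff_of_not_reach h ht hac s' hcu huVt hnr]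
    obtain ⟨v₀, ⟨hv₀, hv₀C⟩, huniq⟩ := ht.2.2 ℓ U huVt C hC
    by_cases hrepl : HNode.node ℓ U = a ∧ C = cladeUnion c₀
    · obtain ⟨rfl, rfl⟩ := hrepl
      refine ⟨c', ⟨Or.inr rfl, hcu⟩, ?_⟩
      rintro v ⟨⟨hv, hne⟩ | hv, hvC⟩
      · exact absurd (by rw [huniq v ⟨hv, hvC⟩, huniq c₀ ⟨hac, rfl⟩]) hne
      · exact (Prod.mk.inj hv).2
    · refine ⟨v₀, ⟨Or.inl ⟨hv₀, fun heq => hrepl ⟨(Prod.mk.inj heq).1, ?_⟩⟩, hv₀C⟩, ?_⟩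
      · rw [← hv₀C, (Prod.mk.inj heq).2]
      rintro v ⟨⟨hv, -⟩ | hv, hvC⟩
      · exact huniq v ⟨hv, hvC⟩
      · exact absurd ⟨(Prod.mk.inj hv).1, by rw [← hvC, (Prod.mk.inj hv).2, hcu]⟩ hrepl
  · simp_rw [mem_swapEdges_iff_of_mem h ht hac ha s' hcu hus]
    exact s'.unique_desc ℓ U hus C hC

lemma historyIn_swapEdges (h : IsHSDAG V E) (ht : HistoryIn V E Vt Et) (hac : (a, c₀) ∈ Et)
    (ha : a ≠ HNode.ua) (s' : IsSubhistoryRooted V E Vs' Es' c')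
    (hcu : cladeUnion c' = cladeUnion c₀) (haE : (a, c') ∈ E) :
    HistoryIn V E {u | Reach (swapEdges Et a c₀ c' Es') HNode.ua u} (swapEdges Et a c₀ c' Es') := by
  set En := swapEdges Et a c₀ c' Es'
  have G := ht.2.2.1
  have hEn : En ⊆ E := by
    rintro e (⟨he, -⟩ | rfl | he)
    exacts [ht.2.1 he, haE, s'.subE he]
  have hrest : ∀ u ∈ Vt, ¬ Reach Et c₀ u → Reach En HNode.ua u := fun u hu hnr =>
    (reach_sdiff_augEdgesBelow (G.reach_ua u hu) hnr).mono Set.subset_union_left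
  have hreach_a : Reach En HNode.ua a :=
    hrest a (G.edge_mem _ hac).1 (G.not_reach_of_mem subset_rfl hac ha)
  have hsrc : ∀ e ∈ En, Reach En HNode.ua e.1 := by
    rintro e (⟨he, hnot⟩ | rfl | he)
    · exact hrest _ (G.edge_mem _ he).1 fun hr => hnot (Or.inr ⟨he, hr⟩)
    · exact hreach_a
    · exact (hreach_a.tail (Or.inr (Or.inl rfl))).trans
        ((s'.reach_root _ (s'.edge_mem _ he).1).mono fun _ he => Or.inr (Or.inr he))
  obtain ⟨r, hr, hrq⟩ := ht.2.2.2.1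
  have hroot : ∃! v, (HNode.ua, v) ∈ En := by
    refine ⟨r, Or.inl ⟨hr, ?_⟩, ?_⟩
    · rintro (hra | hra)
      · exact ha (Prod.mk.inj hra).1.symm
      · exact G.ne_ua_of_reach subset_rfl (G.snd_ne_ua hac) hra.2 rfl
    · rintro v (⟨hv, -⟩ | hv | hv)
      · exact hrq v hv
      · exact absurd (Prod.mk.inj hv).1.symm ha
      · exact absurd (s'.edge_mem _ hv).1 s'.ua_not_mem
  have hud := uniqueDesc_swapEdges h ht.2.2 hac ha s' hcu
  refine ⟨fun u hu => h.mem_of_reach hEn h.ua_mem hu, hEn, ⟨ReflTransGen.refl,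
    fun ℓ U hu => h.valid ℓ U (h.mem_of_reach hEn h.ua_mem hu),
    fun e he => ⟨hsrc e he, (hsrc e he).tail he⟩, fun _ hv => hv,
    fun v hv => h.no_in_ua v (hEn hv), fun ℓ U v hv => h.edge_clade ℓ U v (hEn hv),
    fun ℓ U hu C hC => (hud ℓ U hu C hC).exists⟩, hroot, hud⟩

lemma gweight_swapEdges {W : Type v} [AddCommMonoid W] (f : HNode Y × HNode Y → W)
    (h : IsHSDAG V E) (ht : IsHistory Vt Et) (hac : (a, c₀) ∈ Et)
    (s' : IsSubhistoryRooted V E Vs' Es' c') (hcu : cladeUnion c' = cladeUnion c₀) :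
    gweight f (swapEdges Et a c₀ c' Es') =
      gweight f (Et \ augEdgesBelow Et a c₀) + gweight f (insert (a, c') Es') :=
  gweight_union f (disjoint_sdiff_augEdgesBelow h ht hac s' hcu) ht.finite_edges.sdiff
    ((s'.finite_edges h).insert _)

end Swap

section Union

variable {T : Set (Hist Y)}

lemma mem_unionV {v : HNode Y} : v ∈ unionV T ↔ ∃ t ∈ T, v ∈ t.1 := by
  simp [unionV]

lemma mem_unionE {e : HNode Y × HNode Y} :
    e ∈ unionE T ↔ ∃ t ∈ T, e ∈ t.2 := by
  simp [unionE]

lemma isHSDAG_insert_unionV (hT : ∀ t ∈ T, IsHSDAG t.1 t.2) :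
    IsHSDAG (insert HNode.ua (unionV T)) (unionE T) := by
  have hnode : ∀ {ℓ U}, HNode.node ℓ U ∈ insert HNode.ua (unionV T) →
      ∃ t ∈ T, HNode.node ℓ U ∈ t.1 := fun hu =>
    mem_unionV.mp (hu.resolve_left node_ne_ua)
  refine ⟨Set.mem_insert _ _, fun ℓ U hu => ?_, fun e he => ?_, fun v hv => ?_,
    fun v hv => ?_, fun ℓ U v hv => ?_, fun ℓ U hu C hC => ?_⟩
  · obtain ⟨t, ht, hu⟩ := hnode hu
    exact (hT t ht).valid ℓ U hu
  · obtain ⟨t, ht, he⟩ := mem_unionE.mp he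
    exact ⟨Or.inr (mem_unionV.mpr ⟨t, ht, ((hT t ht).edge_mem e he).1⟩),
      Or.inr (mem_unionV.mpr ⟨t, ht, ((hT t ht).edge_mem e he).2⟩)⟩
  · rcases hv with rfl | hv
    · exact ReflTransGen.refl
    · obtain ⟨t, ht, hv⟩ := mem_unionV.mp hv
      exact ((hT t ht).reach_ua v hv).mono fun e he => mem_unionE.mpr ⟨t, ht, he⟩
  · obtain ⟨t, ht, hv⟩ := mem_unionE.mp hv
    exact (hT t ht).no_in_ua v hv
  · obtain ⟨t, ht, hv⟩ := mem_unionE.mp hv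
    exact (hT t ht).edge_clade ℓ U v hv
  · obtain ⟨t, ht, hu⟩ := hnode hu
    obtain ⟨v, hv, hvC⟩ := (hT t ht).clade_cov ℓ U hu C hC
    exact ⟨v, mem_unionE.mpr ⟨t, ht, hv⟩, hvC⟩

lemma historyIn_insert_unionV {t : Hist Y} (ht : t ∈ T) (hist : IsHistory t.1 t.2) :
    HistoryIn (insert HNode.ua (unionV T)) (unionE T) t.1 t.2 :=
  ⟨fun _ hv => Or.inr (mem_unionV.mpr ⟨t, ht, hv⟩), fun _ he => mem_unionE.mpr ⟨t, ht, he⟩,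
    hist⟩

end Union

section MinWeight

variable {V : Set (HNode Y)} {E : Set (HNode Y × HNode Y)}
  {W : Type v} [AddCommMonoid W] [PartialOrder W] {f : HNode Y × HNode Y → W}

/-- Otherwise swapping in the augmented subhistory of `t₄` would make `t₃` lighter. -/
lemma not_lt_gweight_augEdgesBelow (h : IsHSDAG V E) (hco : CladeOrdered f V E)
    {t₃ t₄ : Hist Y} (h₃ : t₃ ∈ minHistories f V E) (h₄ : HistoryIn V E t₄.1 t₄.2)
    {a c₃ c₄ : HNode Y} (ha : a ≠ HNode.ua) (h3 : (a, c₃) ∈ t₃.2) (h4 : (a, c₄) ∈ t₄.2)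
    (hcu : cladeUnion c₄ = cladeUnion c₃) :
    ¬ gweight f (augEdgesBelow t₄.2 a c₄) < gweight f (augEdgesBelow t₃.2 a c₃) := by
  intro hlt
  obtain ⟨ℓ, U, rfl⟩ := exists_eq_node_of_ne_ua ha
  have hm₃ := h₃.1.gweight_augEdgesBelow_mem f h3
  have hm₄ := h₄.gweight_augEdgesBelow_mem f h4
  rw [hcu] at hm₄
  have hadd := ((hco.2.1 ℓ U (h.edge_mem _ (h₃.1.2.1 h3)).1 _
    (h.edge_clade ℓ U c₃ (h₃.1.2.1 h3))).2 _ hm₄ _ hm₃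
    (gweight f (t₃.2 \ augEdgesBelow t₃.2 (HNode.node ℓ U) c₃))).mp hlt
  have s' : IsSubhistoryRooted V E {u | Reach t₄.2 c₄ u} (edgesBelow t₄.2 c₄) c₄ :=
    h₄.isSubhistoryRooted_edgesBelow (h₄.2.2.1.edge_mem _ h4).2 (h₄.2.2.1.snd_ne_ua h4)
  refine (h₃.2 (_, _) (historyIn_swapEdges h h₃.1 h3 ha s' hcu (h₄.2.1 h4))).not_gt ?_
  show gweight f (swapEdges t₃.2 _ c₃ c₄ (edgesBelow t₄.2 c₄)) < gweight f t₃.2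
  rw [gweight_swapEdges f h h₃.1.2.2 h3 s' hcu,
    gweight_eq_sdiff_add f (Set.insert_subset h3 (edgesBelow_subset _ _)) h₃.1.2.2.finite_edges,
    add_comm, add_comm (gweight f (t₃.2 \ _))]
  exact hadd

lemma gweight_augEdgesBelow_eq (h : IsHSDAG V E) (hco : CladeOrdered f V E)
    {t₃ t₄ : Hist Y} (h₃ : t₃ ∈ minHistories f V E) (h₄ : t₄ ∈ minHistories f V E)
    {a c₃ c₄ : HNode Y} (ha : a ≠ HNode.ua) (h3 : (a, c₃) ∈ t₃.2) (h4 : (a, c₄) ∈ t₄.2)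
    (hcu : cladeUnion c₄ = cladeUnion c₃) :
    gweight f (augEdgesBelow t₃.2 a c₃) = gweight f (augEdgesBelow t₄.2 a c₄) := by
  obtain ⟨ℓ, U, rfl⟩ := exists_eq_node_of_ne_ua ha
  have hm₃ := h₃.1.gweight_augEdgesBelow_mem f h3
  have hm₄ := h₄.1.gweight_augEdgesBelow_mem f h4
  rw [hcu] at hm₄
  rcases (hco.2.1 ℓ U (h.edge_mem _ (h₃.1.2.1 h3)).1 _
    (h.edge_clade ℓ U c₃ (h₃.1.2.1 h3))).1 _ hm₃ _ hm₄ with hle | hle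
  · exact hle.lt_or_eq.resolve_left
      (not_lt_gweight_augEdgesBelow h hco h₄ h₃.1 ha h4 h3 hcu.symm)
  · exact (hle.lt_or_eq.resolve_left
      (not_lt_gweight_augEdgesBelow h hco h₃ h₄.1 ha h3 h4 hcu)).symm

lemma gweight_eq_of_subset_unionE (h : IsHSDAG V E) (hco : CladeOrdered f V E)
    {t₃ : Hist Y} (h₃ : t₃ ∈ minHistories f V E) {b : HNode Y} (hb : b ∈ t₃.1)
    (hbne : b ≠ HNode.ua) {Vs : Set (HNode Y)} {Es : Set (HNode Y × HNode Y)}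
    (s : IsSubhistoryRooted V E Vs Es b) (hEs : Es ⊆ unionE (minHistories f V E)) :
    gweight f Es = gweight f (edgesBelow t₃.2 b) := by
  induction hn : (cladeUnion b).ncard using Nat.strong_induction_on
    generalizing t₃ b Vs Es with
  | _ n IH =>
  obtain ⟨ℓ, U, rfl⟩ := exists_eq_node_of_ne_ua hbne
  have hbV : HNode.node ℓ U ∈ V := s.subV s.root_mem
  have ht₃ := h₃.1
  obtain ⟨w, hw_out, hw⟩ := h.exists_child_fun s.subE (s.unique_desc ℓ U s.root_mem)
  obtain ⟨w₃, hw₃_out, hw₃⟩ := h.exists_child_fun ht₃.2.1 (ht₃.2.2.2.2 ℓ U hb)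
  conv_lhs => rw [← s.edgesBelow_root]
  rw [h.gweight_edgesBelow_eq_finsum f s.subE hbV
      ((s.finite_edges h).subset (edgesBelow_subset _ _)) hw_out hw,
    h.gweight_edgesBelow_eq_finsum f ht₃.2.1 hbV
      (ht₃.2.2.finite_edges.subset (edgesBelow_subset _ _)) hw₃_out hw₃]
  refine finsum_mem_congr rfl fun C hC => ?_
  have hbw : (HNode.node ℓ U, w C) ∈ Es := (hw_out _).2 ⟨C, hC, rfl⟩
  obtain ⟨t₄, h₄, hbw₄⟩ := mem_unionE.mp (hEs hbw)
  have hlt : (cladeUnion (w C)).ncard < n := hn ▸ Set.ncard_lt_ncard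
    (by rw [hw C hC]; exact (h.valid ℓ U hbV).ssubset_cladeUnion ℓ hC) (h.cladeUnion_finite hbV)
  have s_w := s.isSubhistoryRooted_edgesBelow (s.edge_mem _ hbw).2
  calc gweight f (augEdgesBelow Es (HNode.node ℓ U) (w C))
      = f (HNode.node ℓ U, w C) + gweight f (edgesBelow Es (w C)) :=
        gweight_augEdgesBelow f (h.not_reach_of_mem s.subE (s.subE hbw) node_ne_ua)
          (s_w.finite_edges h)
    _ = f (HNode.node ℓ U, w C) + gweight f (edgesBelow t₄.2 (w C)) := by
        rw [IH _ hlt h₄ (h₄.1.2.2.1.edge_mem _ hbw₄).2 (h.snd_ne_ua (s.subE hbw)) s_w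
          ((edgesBelow_subset _ _).trans hEs) rfl]
    _ = gweight f (augEdgesBelow t₄.2 (HNode.node ℓ U) (w C)) :=
        (gweight_augEdgesBelow f (h.not_reach_of_mem h₄.1.2.1 (h₄.1.2.1 hbw₄) node_ne_ua)
          (h₄.1.2.2.finite_edges.subset (edgesBelow_subset _ _))).symm
    _ = gweight f (augEdgesBelow t₃.2 (HNode.node ℓ U) (w₃ C)) :=
        gweight_augEdgesBelow_eq h hco h₄ h₃ node_ne_ua hbw₄ ((hw₃_out _).2 ⟨C, hC, rfl⟩)
          (by rw [hw C hC, hw₃ C hC])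

lemma HistoryIn.gweight_le_of_subset_unionE (h : IsHSDAG V E) (hco : CladeOrdered f V E)
    {Vt : Set (HNode Y)} {Et : Set (HNode Y × HNode Y)} (ht : HistoryIn V E Vt Et)
    (hEt : Et ⊆ unionE (minHistories f V E)) {Vt' : Set (HNode Y)}
    {Et' : Set (HNode Y × HNode Y)} (ht' : HistoryIn V E Vt' Et') :
    gweight f Et ≤ gweight f Et' := by
  obtain ⟨r, hr, -⟩ := ht.2.2.2.1
  obtain ⟨t₃, h₃, hr₃⟩ := mem_unionE.mp (hEt hr)
  have hrne := ht.2.2.1.snd_ne_ua hr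
  have s := ht.isSubhistoryRooted_edgesBelow (ht.2.2.1.edge_mem _ hr).2 hrne
  calc gweight f Et = f (HNode.ua, r) + gweight f (edgesBelow Et r) := ht.2.2.gweight_eq f hr
    _ = f (HNode.ua, r) + gweight f (edgesBelow t₃.2 r) := by
        rw [gweight_eq_of_subset_unionE h hco h₃ (h₃.1.2.2.1.edge_mem _ hr₃).2 hrne s
          ((edgesBelow_subset _ _).trans hEt)]
    _ = gweight f t₃.2 := (h₃.1.2.2.gweight_eq f hr₃).symm
    _ ≤ gweight f Et' := h₃.2 (Vt', Et') ht'

end MinWeight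

/-- Corollary `trimDAG`: every history sDAG has a trim whose histories
are exactly the minimum-weight histories of the original history sDAG. -/
theorem exists_min_weight_trim {W : Type v} [AddCommMonoid W] [PartialOrder W]
    (V : Set (HNode Y)) (E : Set (HNode Y × HNode Y)) (h : IsHSDAG V E)
    (f : HNode Y × HNode Y → W) (hco : CladeOrdered f V E) :
    ∃ V' E', IsHSDAG V' E' ∧ V' ⊆ V ∧ E' ⊆ E ∧
      ∀ Vt Et, (HistoryIn V' E' Vt Et ↔
        (HistoryIn V E Vt Et ∧
          ∀ Vt' Et', HistoryIn V E Vt' Et' → gweight f Et ≤ gweight f Et')) := by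
  set T := minHistories f V E
  have hV : insert HNode.ua (unionV T) ⊆ V :=
    Set.insert_subset h.ua_mem (Set.iUnion₂_subset fun t ht => ht.1.1)
  have hE : unionE T ⊆ E := Set.iUnion₂_subset fun t ht => ht.1.2.1
  refine ⟨_, _, isHSDAG_insert_unionV fun t ht => ht.1.2.2.1, hV, hE, fun Vt Et =>
    ⟨fun ht => ?_, fun ht => historyIn_insert_unionV (t := (Vt, Et)) ⟨ht.1, fun t' => ht.2 _ _⟩
      ht.1.2.2⟩⟩
  have ht' := ht.mono hV hE
  exact ⟨ht', fun _ _ => ht'.gweight_le_of_subset_unionE h hco ht.2.1⟩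

end HistorySDAGs
end

section
/- A history t₀ = (V₀,E₀) determines a unique label-collapsed history t_c which is the result of a finite sequence of edge collapses: there exists a finite sequence of histories t₀, t₁, …, t_n such that each tᵢ is the result of collapsing in t_{i-1} some edge eᵢ = ((ℓᵢ,Uᵢ),(ℓᵢ',Uᵢ')) with ℓᵢ = ℓᵢ' and Uᵢ' ≠ ∅, and t_n is label-collapsed; moreover, for any such sequence the final history t_n equals t_c. -/
/-!
In a history the clade union is injective on the nodes other than `ρ`, and clade unions
strictly shrink along edges, so a history is a finite tree determined by its clades.
Collapsing an edge `(p, c)` merges `p` and `c` into a fresh node with the same clade union as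
`p`, which again gives a history with one edge fewer; hence sequences of collapses terminate.
Collapses of two distinct edges commute: in either order the composite of the two collapse
maps fixes every node other than the (at most four) endpoints and sends these to the same
merged nodes, by a set identity between the subpartitions. Restricted to histories,
label-collapse steps thus have the diamond property, and Church–Rosser makes the
label-collapsed history reached from a history unique.
-/

universe u v

namespace HistorySDAGs

variable {Y : Type u}

variable {W : Type v}

section Partitions

variable {ℓ : Y} {U : Set (Set Y)} {C : Set Y}

lemma IsPart.nonempty_of_mem (h : IsPart U) (hC : C ∈ U) : C.Nonempty :=
  Set.nonempty_iff_ne_empty.2 (h.1 C hC)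

lemma IsPart.exists_ne (h : IsPart U) (hC : C ∈ U) : ∃ D ∈ U, D ≠ C := by
  by_contra! hcon
  exact h.2.2.1 C (Set.eq_singleton_iff_unique_mem.2 ⟨hC, hcon⟩)

lemma cladeUnion_node_of_ne_empty (hU : U ≠ ∅) : cladeUnion (HNode.node ℓ U) = ⋃₀ U := by
  simp [cladeUnion, hU]

lemma subset_cladeUnion_of_mem (hC : C ∈ U) : C ⊆ cladeUnion (HNode.node ℓ U) := by
  rw [cladeUnion_node_of_ne_empty (Set.nonempty_of_mem hC).ne_empty]
  exact Set.subset_sUnion_of_mem hC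

lemma IsPart.cladeUnion_nonempty (h : IsPart U) : (cladeUnion (HNode.node ℓ U)).Nonempty := by
  rcases U.eq_empty_or_nonempty with rfl | ⟨C, hC⟩
  · simp [cladeUnion]
  · exact (h.nonempty_of_mem hC).mono (subset_cladeUnion_of_mem hC)

lemma IsPart.cladeUnion_finite (h : IsPart U) : (cladeUnion (HNode.node ℓ U)).Finite := by
  rcases eq_or_ne U ∅ with rfl | hU
  · simp [cladeUnion]
  · rw [cladeUnion_node_of_ne_empty hU]
    exact h.2.2.2.1.sUnion h.2.2.2.2

end Partitions

namespace IsHistory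

variable {V : Set (HNode Y)} {E : Set (HNode Y × HNode Y)} {a b c p v w : HNode Y}

lemma ne_ua_of_edge (hH : IsHistory V E) (h : (a, b) ∈ E) : b ≠ HNode.ua := by
  rintro rfl
  exact hH.1.no_in_ua a h

lemma cladeUnion_nonempty (hH : IsHistory V E) (hv : v ∈ V) (hv' : v ≠ HNode.ua) :
    (cladeUnion v).Nonempty := by
  cases v with
  | ua => exact absurd rfl hv'
  | node ℓ U => exact (hH.1.valid ℓ U hv).cladeUnion_nonempty

lemma cladeUnion_finite (hH : IsHistory V E) (hv : v ∈ V) : (cladeUnion v).Finite := by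
  cases v with
  | ua => simp [cladeUnion]
  | node ℓ U => exact (hH.1.valid ℓ U hv).cladeUnion_finite

lemma cladeUnion_ssubset_of_edge (hH : IsHistory V E) (ha : a ≠ HNode.ua) (h : (a, b) ∈ E) :
    cladeUnion b ⊂ cladeUnion a := by
  cases a with
  | ua => exact absurd rfl ha
  | node ℓ U =>
    have hP : IsPart U := hH.1.valid ℓ U (hH.1.edge_mem _ h).1
    have hb : cladeUnion b ∈ U := hH.1.edge_clade ℓ U b h
    refine ⟨subset_cladeUnion_of_mem hb, fun hsub => ?_⟩
    obtain ⟨D, hD, hne⟩ := hP.exists_ne hb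
    obtain ⟨y, hy⟩ := hP.nonempty_of_mem hD
    exact Set.disjoint_left.1 (hP.2.1 D hD _ hb hne) hy (hsub (subset_cladeUnion_of_mem hD hy))

lemma cladeUnion_subset_of_reach (hH : IsHistory V E) (ha : a ≠ HNode.ua) (h : Reach E a b) :
    cladeUnion b ⊆ cladeUnion a := by
  induction h using Relation.ReflTransGen.head_induction_on with
  | refl => exact subset_rfl
  | head hac _ ih =>
    exact (ih (hH.ne_ua_of_edge hac)).trans (hH.cladeUnion_ssubset_of_edge ha hac).subset

lemma eq_of_reach_of_cladeUnion_subset (hH : IsHistory V E) (ha : a ≠ HNode.ua)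
    (h : Reach E a b) (hsub : cladeUnion a ⊆ cladeUnion b) : a = b := by
  rcases Relation.ReflTransGen.cases_head h with rfl | ⟨z, haz, hzb⟩
  · rfl
  · exact absurd (hsub.trans (hH.cladeUnion_subset_of_reach (hH.ne_ua_of_edge haz) hzb))
      (hH.cladeUnion_ssubset_of_edge ha haz).not_subset

lemma not_reach_of_edge (hH : IsHistory V E) (h : (a, b) ∈ E) : ¬ Reach E b a := by
  intro hba
  rcases eq_or_ne a HNode.ua with rfl | ha
  · rcases Relation.ReflTransGen.cases_tail hba with hb | ⟨z, _, hz⟩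
    · exact hH.ne_ua_of_edge h hb.symm
    · exact hH.1.no_in_ua z hz
  · exact (hH.cladeUnion_ssubset_of_edge ha h).not_subset
      (hH.cladeUnion_subset_of_reach (hH.ne_ua_of_edge h) hba)

lemma reach_root_s9 (hH : IsHistory V E) {r : HNode Y} (hr : (HNode.ua, r) ∈ E) (hv : v ∈ V)
    (hv' : v ≠ HNode.ua) : Reach E r v := by
  rcases Relation.ReflTransGen.cases_head (hH.1.reach_ua v hv) with h | ⟨z, hz, hzv⟩
  · exact absurd h.symm hv'
  · obtain ⟨_, _, hroot⟩ := hH.2.1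
    rwa [(hroot z hz).trans (hroot r hr).symm] at hzv

lemma eq_of_edge_of_edge_of_inter (hH : IsHistory V E) (hb : (a, b) ∈ E) (hw : (a, w) ∈ E)
    (hbw : (cladeUnion b ∩ cladeUnion w).Nonempty) : b = w := by
  cases a with
  | ua =>
    obtain ⟨_, _, hroot⟩ := hH.2.1
    exact (hroot b hb).trans (hroot w hw).symm
  | node ℓ U =>
    have hbU := hH.1.edge_clade ℓ U b hb
    by_cases hcu : cladeUnion b = cladeUnion w
    · obtain ⟨_, _, huniq⟩ := hH.2.2 ℓ U (hH.1.edge_mem _ hb).1 _ hbU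
      exact (huniq b ⟨hb, rfl⟩).trans (huniq w ⟨hw, hcu.symm⟩).symm
    · exact absurd hbw (Set.not_nonempty_iff_eq_empty.2 (Set.disjoint_iff_inter_eq_empty.1
        ((hH.1.valid ℓ U (hH.1.edge_mem _ hb).1).2.1 _ hbU _ (hH.1.edge_clade ℓ U w hw) hcu)))

lemma reach_or_reach (hH : IsHistory V E) (ha : a ∈ V) (hb : b ∈ V) (hb' : b ≠ HNode.ua)
    (hab : (cladeUnion a ∩ cladeUnion b).Nonempty) : Reach E a b ∨ Reach E b a := by
  have hua := hH.1.reach_ua a ha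
  clear ha
  induction hua with
  | refl => simp [cladeUnion] at hab
  | @tail a' a _ ha'a ih =>
    rcases eq_or_ne a' HNode.ua with rfl | ha'
    · exact Or.inl (hH.reach_root_s9 ha'a hb hb')
    have hsub := (hH.cladeUnion_ssubset_of_edge ha' ha'a).subset
    rcases ih (hab.mono (Set.inter_subset_inter_left _ hsub)) with h | h
    · rcases Relation.ReflTransGen.cases_head h with rfl | ⟨z, ha'z, hzb⟩
      · exact Or.inr (Relation.ReflTransGen.single ha'a)
      · have hz : z = a := hH.eq_of_edge_of_edge_of_inter ha'z ha'a <| hab.mono fun y hy =>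
          ⟨hH.cladeUnion_subset_of_reach (hH.ne_ua_of_edge ha'z) hzb hy.2, hy.1⟩
        exact Or.inl (hz ▸ hzb)
    · exact Or.inr (h.tail ha'a)

lemma cladeUnion_injOn (hH : IsHistory V E) : Set.InjOn cladeUnion (V \ {HNode.ua}) := by
  rintro a ⟨ha, ha'⟩ b ⟨hb, hb'⟩ hab
  have hab' : (cladeUnion a ∩ cladeUnion b).Nonempty := by
    rw [hab, Set.inter_self]
    exact hH.cladeUnion_nonempty hb hb'
  rcases hH.reach_or_reach ha hb hb' hab' with h | h
  · exact hH.eq_of_reach_of_cladeUnion_subset ha' h hab.subset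
  · exact (hH.eq_of_reach_of_cladeUnion_subset hb' h hab.symm.subset).symm

lemma eq_of_edge_of_edge_of_reach (hH : IsHistory V E) (ha : (a, v) ∈ E) (hb : (b, v) ∈ E)
    (hab : Reach E a b) : a = b := by
  rcases Relation.ReflTransGen.cases_head hab with rfl | ⟨z, haz, hzb⟩
  · rfl
  have hzv : Reach E z v := hzb.tail hb
  have hv := (hH.1.edge_mem _ ha).2
  have hz : z = v := hH.eq_of_edge_of_edge_of_inter haz ha <| by
    rw [Set.inter_eq_right.2 (hH.cladeUnion_subset_of_reach (hH.ne_ua_of_edge haz) hzv)]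
    exact hH.cladeUnion_nonempty hv (hH.ne_ua_of_edge ha)
  exact absurd (hz ▸ hzb) (hH.not_reach_of_edge hb)

lemma unique_parent (hH : IsHistory V E) (ha : (a, v) ∈ E) (hb : (b, v) ∈ E) : a = b := by
  have ha_mem := (hH.1.edge_mem _ ha).1
  have hb_mem := (hH.1.edge_mem _ hb).1
  rcases eq_or_ne a HNode.ua with rfl | ha'
  · exact hH.eq_of_edge_of_edge_of_reach ha hb (hH.1.reach_ua b hb_mem)
  rcases eq_or_ne b HNode.ua with rfl | hb'
  · exact (hH.eq_of_edge_of_edge_of_reach hb ha (hH.1.reach_ua a ha_mem)).symm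
  have hv := hH.cladeUnion_nonempty (hH.1.edge_mem _ ha).2 (hH.ne_ua_of_edge ha)
  have hab : (cladeUnion a ∩ cladeUnion b).Nonempty := hv.mono fun y hy =>
    ⟨(hH.cladeUnion_ssubset_of_edge ha' ha).subset hy,
      (hH.cladeUnion_ssubset_of_edge hb' hb).subset hy⟩
  rcases hH.reach_or_reach ha_mem hb_mem hb' hab with h | h
  · exact hH.eq_of_edge_of_edge_of_reach ha hb h
  · exact (hH.eq_of_edge_of_edge_of_reach hb ha h).symm

lemma cladeUnion_mem_iff_edge (hH : IsHistory V E) {ℓ : Y} {U : Set (Set Y)}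
    (hx : HNode.node ℓ U ∈ V) (hw : w ∈ V) (hw' : w ≠ HNode.ua) :
    cladeUnion w ∈ U ↔ (HNode.node ℓ U, w) ∈ E := by
  refine ⟨fun h => ?_, hH.1.edge_clade ℓ U w⟩
  obtain ⟨z, hz, hzw⟩ := hH.1.clade_cov ℓ U hx _ h
  obtain rfl : z = w :=
    hH.cladeUnion_injOn ⟨(hH.1.edge_mem _ hz).2, hH.ne_ua_of_edge hz⟩ ⟨hw, hw'⟩ hzw
  exact hz

lemma finite_nodes (hH : IsHistory V E) : V.Finite := by
  obtain ⟨r, hr, _⟩ := hH.2.1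
  have hr' := hH.ne_ua_of_edge hr
  have hfin : (V \ {HNode.ua}).Finite := by
    -- clade unions embed the nodes into the subsets of the root's clade union
    refine Set.Finite.of_finite_image ?_ hH.cladeUnion_injOn
    refine (hH.cladeUnion_finite (hH.1.edge_mem _ hr).2).finite_subsets.subset ?_
    rintro _ ⟨v, ⟨hv, hv'⟩, rfl⟩
    exact hH.cladeUnion_subset_of_reach hr' (hH.reach_root_s9 hr hv hv')
  exact (hfin.insert HNode.ua).subset fun v hv => by
    by_cases h : v = HNode.ua <;> simp_all

lemma finite_edges_s9 (hH : IsHistory V E) : E.Finite :=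
  (hH.finite_nodes.prod hH.finite_nodes).subset fun e he => hH.1.edge_mem e he

lemma ne_of_edge (hH : IsHistory V E) (h : (a, b) ∈ E) : a ≠ b := by
  rintro rfl
  exact hH.not_reach_of_edge h .refl

lemma snd_ne_of_ne (hH : IsHistory V E) (hpc : (p, c) ∈ E) (hab : (a, b) ∈ E)
    (hne : (a, b) ≠ (p, c)) : b ≠ c := by
  rintro rfl
  exact hne (by rw [hH.unique_parent hab hpc])

lemma cladeUnion_notMem_self (hH : IsHistory V E) {ℓ : Y} {U : Set (Set Y)}
    (hx : HNode.node ℓ U ∈ V) : cladeUnion (HNode.node ℓ U) ∉ U := fun h =>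
  hH.not_reach_of_edge ((hH.cladeUnion_mem_iff_edge hx hx nofun).1 h) .refl

end IsHistory

section CollapseMap

variable {p c n v w : HNode Y} {ℓp ℓc : Y} {Up Uc : Set (Set Y)}

lemma newParent_node :
    newParent (HNode.node ℓp Up) (HNode.node ℓc Uc) =
      HNode.node ℓp ((Up ∪ Uc) \ {cladeUnion (HNode.node ℓc Uc)}) := rfl

lemma collapseMap_left : collapseMap p c n p = n := by simp [collapseMap]

lemma collapseMap_right : collapseMap p c n c = n := by simp [collapseMap]

lemma collapseMap_of_ne (hp : v ≠ p) (hc : v ≠ c) : collapseMap p c n v = v := by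
  simp [collapseMap, hp, hc]

lemma eq_or_of_collapseMap_eq (hv : v ≠ n) (hw : w ≠ n)
    (h : collapseMap p c n v = collapseMap p c n w) :
    v = w ∨ (v = p ∨ v = c) ∧ (w = p ∨ w = c) := by
  unfold collapseMap at h
  split_ifs at h <;> grind

lemma collapseMap_eq_or (p c n v : HNode Y) :
    (v = p ∨ v = c) ∧ collapseMap p c n v = n ∨ (v ≠ p ∧ v ≠ c) ∧ collapseMap p c n v = v := by
  by_cases h : v = p ∨ v = c
  · exact Or.inl ⟨h, if_pos h⟩
  · exact Or.inr ⟨not_or.1 h, if_neg h⟩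

lemma reach_collapseEdgeHist {t : Hist Y} {x y : HNode Y} (h : Reach t.2 x y) :
    Reach (collapseEdgeHist p c n t).2 (collapseMap p c n x) (collapseMap p c n y) := by
  induction h with
  | refl => exact .refl
  | @tail y z _ hyz ih =>
    by_cases h : (y, z) = (p, c)
    · obtain ⟨rfl, rfl⟩ := Prod.mk.inj h
      have hq : collapseMap y z n z = collapseMap y z n y := by
        rw [collapseMap_left, collapseMap_right]
      exact hq ▸ ih
    · exact ih.tail ⟨(y, z), ⟨hyz, h⟩, rfl⟩

lemma collapseMap_collapseMap_comm {p₁ c₁ n₁ p₂ c₂ n₂ m₁ m₂ v : HNode Y}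
    (hshare : p₁ = p₂ ∨ p₁ = c₂ ∨ c₁ = p₂ ∨ c₁ = c₂ → m₁ = m₂)
    (hdisj : p₁ ≠ p₂ ∧ p₁ ≠ c₂ ∧ c₁ ≠ p₂ ∧ c₁ ≠ c₂ → m₁ = n₂ ∧ m₂ = n₁)
    (hn₁ : p₂ ≠ n₁ ∧ c₂ ≠ n₁ ∧ v ≠ n₁) (hn₂ : p₁ ≠ n₂ ∧ c₁ ≠ n₂ ∧ v ≠ n₂) :
    collapseMap (collapseMap p₁ c₁ n₁ p₂) (collapseMap p₁ c₁ n₁ c₂) m₁ (collapseMap p₁ c₁ n₁ v) =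
      collapseMap (collapseMap p₂ c₂ n₂ p₁) (collapseMap p₂ c₂ n₂ c₁) m₂
        (collapseMap p₂ c₂ n₂ v) := by
  unfold collapseMap
  grind

end CollapseMap

def IsCollapsibleEdge (E : Set (HNode Y × HNode Y)) (p c : HNode Y) : Prop :=
  (p, c) ∈ E ∧ ∃ ℓp Up ℓc Uc, p = HNode.node ℓp Up ∧ c = HNode.node ℓc Uc ∧ Uc ≠ ∅

section Collapse

variable {V : Set (HNode Y)} {E : Set (HNode Y × HNode Y)} {p c d a b v p₁ c₁ p₂ c₂ : HNode Y}
  {ℓp ℓc ℓ₀ : Y} {Up Uc U₀ : Set (Set Y)}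

lemma IsCollapsibleEdge.collapseMap_eq_ua_iff (hpc : IsCollapsibleEdge E p c) :
    collapseMap p c (newParent p c) v = HNode.ua ↔ v = HNode.ua := by
  obtain ⟨-, ℓp, Up, ℓc, Uc, rfl, rfl, -⟩ := hpc
  rcases collapseMap_eq_or _ _ _ v with ⟨hv, h⟩ | ⟨-, h⟩
  · rw [h]
    rcases hv with rfl | rfl <;> exact ⟨nofun, nofun⟩
  · rw [h]

namespace IsHistory

lemma isPart_newParent (hH : IsHistory V E) (he : (HNode.node ℓp Up, HNode.node ℓc Uc) ∈ E)
    (hUc : Uc ≠ ∅) : IsPart ((Up ∪ Uc) \ {cladeUnion (HNode.node ℓc Uc)}) := by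
  set C := cladeUnion (HNode.node ℓc Uc)
  have hPp : IsPart Up := hH.1.valid _ _ (hH.1.edge_mem _ he).1
  have hPc : IsPart Uc := hH.1.valid _ _ (hH.1.edge_mem _ he).2
  have hC : C ∈ Up := hH.1.edge_clade _ _ _ he
  have hCc : C ∉ Uc := hH.cladeUnion_notMem_self (hH.1.edge_mem _ he).2
  have hdisj : ∀ X ∈ Up, X ≠ C → ∀ Z ∈ Uc, Disjoint X Z := fun X hX hXC Z hZ =>
    (hPp.2.1 X hX C hC hXC).mono_right (subset_cladeUnion_of_mem hZ)
  refine ⟨?_, ?_, fun D hD => ?_, (hPp.2.2.2.1.union hPc.2.2.2.1).sdiff, ?_⟩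
  · rintro X ⟨hX | hX, -⟩
    exacts [hPp.1 X hX, hPc.1 X hX]
  · rintro X ⟨hX | hX, hXC⟩ Z ⟨hZ | hZ, hZC⟩ hXZ
    · exact hPp.2.1 X hX Z hZ hXZ
    · exact hdisj X hX hXC Z hZ
    · exact (hdisj Z hZ hZC X hX).symm
    · exact hPc.2.1 X hX Z hZ hXZ
  · have hmem : ∀ X ∈ Uc, X = D := fun X hX =>
      (hD ▸ ⟨Or.inr hX, fun h : X = C => hCc (h ▸ hX)⟩ : X ∈ ({D} : Set (Set Y)))
    obtain ⟨X, hX⟩ := Set.nonempty_iff_ne_empty.2 hUc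
    obtain ⟨Z, hZ, hZX⟩ := hPc.exists_ne hX
    exact hZX ((hmem Z hZ).trans (hmem X hX).symm)
  · rintro X ⟨hX | hX, -⟩
    exacts [hPp.2.2.2.2 X hX, hPc.2.2.2.2 X hX]

lemma cladeUnion_newParent (hH : IsHistory V E) (hpc : IsCollapsibleEdge E p c) :
    cladeUnion (newParent p c) = cladeUnion p := by
  obtain ⟨he, ℓp, Up, ℓc, Uc, rfl, rfl, hUc⟩ := hpc
  set C := cladeUnion (HNode.node ℓc Uc)
  have hC : C ∈ Up := hH.1.edge_clade _ _ _ he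
  have hCc : C ∉ Uc := hH.cladeUnion_notMem_self (hH.1.edge_mem _ he).2
  have hU : (Up ∪ Uc) \ {C} = Up \ {C} ∪ Uc := by
    rw [Set.union_sdiff_distrib, Set.sdiff_singleton_eq_self hCc]
  have hne : (Up ∪ Uc) \ {C} ≠ ∅ := by
    rw [hU]
    exact (Set.nonempty_iff_ne_empty.2 hUc).mono Set.subset_union_right |>.ne_empty
  change cladeUnion (HNode.node ℓp ((Up ∪ Uc) \ {C})) = _
  rw [cladeUnion_node_of_ne_empty hne,
    cladeUnion_node_of_ne_empty (Set.nonempty_of_mem hC).ne_empty, hU, Set.sUnion_union,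
    ← cladeUnion_node_of_ne_empty (ℓ := ℓc) hUc, Set.union_comm, ← Set.sUnion_insert,
    Set.insert_sdiff_singleton, Set.insert_eq_of_mem hC]

lemma newParent_notMem (hH : IsHistory V E) (hpc : IsCollapsibleEdge E p c) :
    newParent p c ∉ V := by
  intro hn
  have hcu := hH.cladeUnion_newParent hpc
  obtain ⟨he, ℓp, Up, ℓc, Uc, rfl, rfl, -⟩ := hpc
  have hp : HNode.node ℓp Up ∈ V := (hH.1.edge_mem _ he).1
  have heq := hH.cladeUnion_injOn ⟨hn, nofun⟩ ⟨hp, nofun⟩ hcu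
  have hC : cladeUnion (HNode.node ℓc Uc) ∈ Up := hH.1.edge_clade _ _ _ he
  rw [newParent_node, HNode.node.injEq] at heq
  exact (heq.2 ▸ hC : _ ∈ (Up ∪ Uc) \ _).2 rfl

lemma cladeUnion_collapseMap (hH : IsHistory V E) (hpc : IsCollapsibleEdge E p c) (hv : v ≠ c) :
    cladeUnion (collapseMap p c (newParent p c) v) = cladeUnion v := by
  by_cases hvp : v = p
  · rw [hvp, collapseMap_left, hH.cladeUnion_newParent hpc]
  · rw [collapseMap_of_ne hvp hv]

lemma isPart_of_mem_collapseEdgeHist (hH : IsHistory V E) (hpc : IsCollapsibleEdge E p c)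
    (hx : HNode.node ℓ₀ U₀ ∈ collapseMap p c (newParent p c) '' V) : IsPart U₀ := by
  obtain ⟨v, hv, hqv⟩ := hx
  obtain ⟨he, ℓp, Up, ℓc, Uc, rfl, rfl, hUc⟩ := hpc
  rcases collapseMap_eq_or _ _ _ v with ⟨-, h⟩ | ⟨-, h⟩ <;> rw [h] at hqv
  · rw [newParent_node, HNode.node.injEq] at hqv
    exact hqv.2 ▸ hH.isPart_newParent he hUc
  · exact hH.1.valid _ _ (hqv ▸ hv)

lemma cladeUnion_mem_of_mem_collapseEdgeHist (hH : IsHistory V E) (hpc : IsCollapsibleEdge E p c)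
    {w : HNode Y} (h : (HNode.node ℓ₀ U₀, w) ∈ (collapseEdgeHist p c (newParent p c) (V, E)).2) :
    cladeUnion w ∈ U₀ := by
  obtain ⟨⟨a, b⟩, ⟨hab, hne⟩, heq⟩ := h
  simp only [Prod.mk.injEq] at heq
  obtain ⟨hqa, rfl⟩ := heq
  have hbc := hH.snd_ne_of_ne hpc.1 hab hne
  rw [hH.cladeUnion_collapseMap hpc hbc]
  obtain ⟨he, ℓp, Up, ℓc, Uc, rfl, rfl, -⟩ := hpc
  rcases collapseMap_eq_or _ _ _ a with ⟨hapc, h⟩ | ⟨-, h⟩ <;> rw [h] at hqa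
  · rw [newParent_node, HNode.node.injEq] at hqa
    obtain ⟨-, rfl⟩ := hqa
    have hb := (hH.1.edge_mem _ hab).2
    refine ⟨?_, fun hC => hbc (hH.cladeUnion_injOn ⟨hb, hH.ne_ua_of_edge hab⟩
      ⟨(hH.1.edge_mem _ he).2, nofun⟩ hC)⟩
    rcases hapc with rfl | rfl
    exacts [Or.inl (hH.1.edge_clade _ _ _ hab), Or.inr (hH.1.edge_clade _ _ _ hab)]
  · exact hH.1.edge_clade _ _ _ (hqa ▸ hab)

lemma exists_edge_of_mem_collapseEdgeHist (hH : IsHistory V E) (hpc : IsCollapsibleEdge E p c)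
    (hv : v ∈ V) (hqv : collapseMap p c (newParent p c) v = HNode.node ℓ₀ U₀) {D : Set Y}
    (hD : D ∈ U₀) : ∃ a b, (a, b) ∈ E ∧ (a, b) ≠ (p, c) ∧
      collapseMap p c (newParent p c) a = HNode.node ℓ₀ U₀ ∧ cladeUnion b = D := by
  obtain ⟨he, ℓp, Up, ℓc, Uc, rfl, rfl, -⟩ := hpc
  rcases collapseMap_eq_or _ _ _ v with ⟨-, h⟩ | ⟨⟨hvp, hvc⟩, h⟩ <;> rw [h] at hqv
  · rw [newParent_node, HNode.node.injEq] at hqv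
    obtain ⟨rfl, rfl⟩ := hqv
    obtain ⟨hD | hD, hDC⟩ := hD
    · obtain ⟨b, hb, rfl⟩ := hH.1.clade_cov _ _ (hH.1.edge_mem _ he).1 _ hD
      exact ⟨_, b, hb, fun h => hDC (by rw [(Prod.mk.inj h).2]; rfl), collapseMap_left, rfl⟩
    · obtain ⟨b, hb, rfl⟩ := hH.1.clade_cov _ _ (hH.1.edge_mem _ he).2 _ hD
      exact ⟨_, b, hb, fun h => hH.ne_of_edge he (Prod.mk.inj h).1.symm, collapseMap_right,
        rfl⟩
  · subst hqv
    obtain ⟨b, hb, rfl⟩ := hH.1.clade_cov _ _ hv _ hD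
    exact ⟨_, b, hb, fun h => hvp (Prod.mk.inj h).1, h, rfl⟩

lemma uniqueDesc_collapseEdgeHist (hH : IsHistory V E) (hpc : IsCollapsibleEdge E p c) :
    UniqueDesc (collapseEdgeHist p c (newParent p c) (V, E)).1
      (collapseEdgeHist p c (newParent p c) (V, E)).2 := by
  rintro ℓ₀ U₀ ⟨v, hv, hqv⟩ D hD
  obtain ⟨a, b, hab, hne, hqa, rfl⟩ := hH.exists_edge_of_mem_collapseEdgeHist hpc hv hqv hD
  have hbc := hH.snd_ne_of_ne hpc.1 hab hne
  refine ⟨_, ⟨⟨(a, b), ⟨hab, hne⟩, Prod.ext hqa rfl⟩, hH.cladeUnion_collapseMap hpc hbc⟩, ?_⟩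
  rintro _ ⟨⟨⟨a', b'⟩, ⟨ha'b', hne'⟩, heq⟩, hcu⟩
  simp only [Prod.mk.injEq] at heq
  obtain ⟨-, rfl⟩ := heq
  rw [hH.cladeUnion_collapseMap hpc (hH.snd_ne_of_ne hpc.1 ha'b' hne')] at hcu
  exact congrArg _ (hH.cladeUnion_injOn ⟨(hH.1.edge_mem _ ha'b').2, hH.ne_ua_of_edge ha'b'⟩
    ⟨(hH.1.edge_mem _ hab).2, hH.ne_ua_of_edge hab⟩ hcu)

end IsHistory

theorem isHistory_collapseEdgeHist (hH : IsHistory V E) (hpc : IsCollapsibleEdge E p c) :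
    IsHistory (collapseEdgeHist p c (newParent p c) (V, E)).1
      (collapseEdgeHist p c (newParent p c) (V, E)).2 := by
  have hua := hpc.collapseMap_eq_ua_iff.2 rfl
  have huniq := hH.uniqueDesc_collapseEdgeHist hpc
  refine ⟨⟨⟨_, hH.1.ua_mem, hua⟩, fun _ _ => hH.isPart_of_mem_collapseEdgeHist hpc, ?_, ?_, ?_,
    fun _ _ _ => hH.cladeUnion_mem_of_mem_collapseEdgeHist hpc,
    fun ℓ U hx C hC => (huniq ℓ U hx C hC).exists⟩, ?_, huniq⟩
  · rintro _ ⟨⟨a, b⟩, ⟨hab, -⟩, rfl⟩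
    exact ⟨⟨a, (hH.1.edge_mem _ hab).1, rfl⟩, ⟨b, (hH.1.edge_mem _ hab).2, rfl⟩⟩
  · rintro _ ⟨v, hv, rfl⟩
    exact hua ▸ reach_collapseEdgeHist (hH.1.reach_ua v hv)
  · rintro _ ⟨⟨a, b⟩, ⟨hab, -⟩, heq⟩
    simp only [Prod.mk.injEq] at heq
    exact hH.1.no_in_ua a (hpc.collapseMap_eq_ua_iff.1 heq.2 ▸ hab)
  · obtain ⟨r, hr, hroot⟩ := hH.2.1
    have hp : p ≠ HNode.ua := by
      obtain ⟨-, _, _, _, _, rfl, -⟩ := hpc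
      exact nofun
    refine ⟨_, ⟨(HNode.ua, r), ⟨hr, fun h => hp (Prod.mk.inj h).1.symm⟩, Prod.ext hua rfl⟩, ?_⟩
    rintro _ ⟨⟨a, b⟩, ⟨hab, -⟩, heq⟩
    simp only [Prod.mk.injEq] at heq
    obtain ⟨ha, rfl⟩ := heq
    obtain rfl := hpc.collapseMap_eq_ua_iff.1 ha
    rw [hroot b hab]

namespace IsHistory

lemma newParent_newParent_comm (hH : IsHistory V E) (hc : IsCollapsibleEdge E p c)
    (hd : IsCollapsibleEdge E p d) (hcd : c ≠ d) :
    newParent (newParent p c) d = newParent (newParent p d) c := by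
  have hdc : (d, c) ∉ E := fun h => hH.ne_of_edge hd.1 (hH.unique_parent h hc.1).symm
  have hcd' : (c, d) ∉ E := fun h => hH.ne_of_edge hc.1 (hH.unique_parent h hd.1).symm
  obtain ⟨hpc, ℓp, Up, ℓc, Uc, rfl, rfl, -⟩ := hc
  obtain ⟨hpd, -, -, ℓd, Ud, -, rfl, -⟩ := hd
  rw [← hH.cladeUnion_mem_iff_edge (hH.1.edge_mem _ hpd).2 (hH.1.edge_mem _ hpc).2 nofun] at hdc
  rw [← hH.cladeUnion_mem_iff_edge (hH.1.edge_mem _ hpc).2 (hH.1.edge_mem _ hpd).2 nofun] at hcd'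
  simp only [newParent_node, HNode.node.injEq, true_and]
  ext X
  simp only [Set.mem_sdiff, Set.mem_union, Set.mem_singleton_iff]
  grind

lemma newParent_newParent_assoc (hH : IsHistory V E) (hc : IsCollapsibleEdge E p c)
    (hd : IsCollapsibleEdge E c d) :
    newParent (newParent p c) d = newParent p (newParent c d) := by
  have hC := hH.cladeUnion_newParent hd
  have hpd : (p, d) ∉ E := fun h => hH.ne_of_edge hc.1 (hH.unique_parent h hd.1)
  have hdc : (d, c) ∉ E := fun h => hH.not_reach_of_edge hd.1 (.single h)
  obtain ⟨hpc, ℓp, Up, ℓc, Uc, rfl, rfl, -⟩ := hc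
  obtain ⟨hcd, -, -, ℓd, Ud, -, rfl, -⟩ := hd
  rw [← hH.cladeUnion_mem_iff_edge (hH.1.edge_mem _ hpc).1 (hH.1.edge_mem _ hcd).2 nofun] at hpd
  rw [← hH.cladeUnion_mem_iff_edge (hH.1.edge_mem _ hcd).2 (hH.1.edge_mem _ hpc).2 nofun] at hdc
  simp only [newParent_node] at hC ⊢
  rw [hC, HNode.node.injEq]
  refine ⟨rfl, ?_⟩
  ext X
  simp only [Set.mem_sdiff, Set.mem_union, Set.mem_singleton_iff]
  grind

lemma injOn_collapseEdgeHist (hH : IsHistory V E) (hpc : IsCollapsibleEdge E p c) :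
    Set.InjOn (Prod.map (collapseMap p c (newParent p c)) (collapseMap p c (newParent p c)))
      (E \ {(p, c)}) := by
  rintro ⟨a, b⟩ ⟨hab, hne⟩ ⟨a', b'⟩ ⟨ha'b', hne'⟩ heq
  simp only [Prod.map, Prod.mk.injEq] at heq
  have hbc := hH.snd_ne_of_ne hpc.1 hab hne
  have hb'c := hH.snd_ne_of_ne hpc.1 ha'b' hne'
  obtain rfl : b = b' := by
    have hn := hH.newParent_notMem hpc
    rcases eq_or_of_collapseMap_eq (ne_of_mem_of_not_mem (hH.1.edge_mem _ hab).2 hn)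
      (ne_of_mem_of_not_mem (hH.1.edge_mem _ ha'b').2 hn) heq.2 with h | ⟨h, h'⟩
    · exact h
    · exact (h.resolve_right hbc).trans (h'.resolve_right hb'c).symm
  rw [hH.unique_parent hab ha'b']

lemma collapseEdgeHist_collapseEdgeHist (hH : IsHistory V E) (hpc : IsCollapsibleEdge E p c)
    (he : (a, b) ∈ E) (hne : (a, b) ≠ (p, c)) {a' b' n : HNode Y}
    (ha : collapseMap p c (newParent p c) a = a') (hb : collapseMap p c (newParent p c) b = b') :
    collapseEdgeHist a' b' n (collapseEdgeHist p c (newParent p c) (V, E)) =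
      ((collapseMap a' b' n ∘ collapseMap p c (newParent p c)) '' V,
        Prod.map (collapseMap a' b' n ∘ collapseMap p c (newParent p c))
          (collapseMap a' b' n ∘ collapseMap p c (newParent p c)) '' (E \ {(p, c), (a, b)})) := by
  subst ha hb
  have h := (hH.injOn_collapseEdgeHist hpc).image_sdiff_subset
    (Set.singleton_subset_iff.2 ⟨he, hne⟩)
  rw [Set.image_singleton] at h
  refine Prod.ext (Set.image_image ..) ?_
  change _ '' (Prod.map _ _ '' (E \ {(p, c)}) \ {Prod.map _ _ (a, b)}) = _
  rw [← h, Set.image_image, Set.sdiff_sdiff, Set.singleton_union]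
  rfl

lemma newParent_collapseMap_of_chain (hH : IsHistory V E) (hc : IsCollapsibleEdge E p c)
    (hd : IsCollapsibleEdge E c d) :
    newParent (collapseMap p c (newParent p c) c) (collapseMap p c (newParent p c) d) =
      newParent (collapseMap c d (newParent c d) p) (collapseMap c d (newParent c d) c) := by
  have hdp : d ≠ p := fun h => hH.not_reach_of_edge hd.1 (.single (h ▸ hc.1))
  have hpd : p ≠ d := fun h => hdp h.symm
  rw [collapseMap_right, collapseMap_of_ne hdp (hH.ne_of_edge hd.1).symm,
    collapseMap_of_ne (hH.ne_of_edge hc.1) hpd, collapseMap_left,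
    hH.newParent_newParent_assoc hc hd]

lemma newParent_collapseMap_comm (hH : IsHistory V E) (h₁ : IsCollapsibleEdge E p₁ c₁)
    (h₂ : IsCollapsibleEdge E p₂ c₂) (hne : (p₁, c₁) ≠ (p₂, c₂))
    (hshare : p₁ = p₂ ∨ p₁ = c₂ ∨ c₁ = p₂ ∨ c₁ = c₂) :
    newParent (collapseMap p₁ c₁ (newParent p₁ c₁) p₂) (collapseMap p₁ c₁ (newParent p₁ c₁) c₂) =
      newParent (collapseMap p₂ c₂ (newParent p₂ c₂) p₁)
        (collapseMap p₂ c₂ (newParent p₂ c₂) c₁) := by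
  rcases hshare with rfl | rfl | rfl | rfl
  · have hc : c₁ ≠ c₂ := fun h => hne (h ▸ rfl)
    rw [collapseMap_left, collapseMap_of_ne (hH.ne_of_edge h₂.1).symm hc.symm, collapseMap_left,
      collapseMap_of_ne (hH.ne_of_edge h₁.1).symm hc, hH.newParent_newParent_comm h₁ h₂ hc]
  · exact (hH.newParent_collapseMap_of_chain h₂ h₁).symm
  · exact hH.newParent_collapseMap_of_chain h₁ h₂
  · exact absurd (by rw [hH.unique_parent h₁.1 h₂.1]) hne

theorem collapseEdgeHist_comm (hH : IsHistory V E) (h₁ : IsCollapsibleEdge E p₁ c₁)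
    (h₂ : IsCollapsibleEdge E p₂ c₂) (hne : (p₁, c₁) ≠ (p₂, c₂)) {p₁' c₁' p₂' c₂' : HNode Y}
    (hp₂ : collapseMap p₁ c₁ (newParent p₁ c₁) p₂ = p₂')
    (hc₂ : collapseMap p₁ c₁ (newParent p₁ c₁) c₂ = c₂')
    (hp₁ : collapseMap p₂ c₂ (newParent p₂ c₂) p₁ = p₁')
    (hc₁ : collapseMap p₂ c₂ (newParent p₂ c₂) c₁ = c₁') :
    collapseEdgeHist p₂' c₂' (newParent p₂' c₂') (collapseEdgeHist p₁ c₁ (newParent p₁ c₁) (V, E)) =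
      collapseEdgeHist p₁' c₁' (newParent p₁' c₁')
        (collapseEdgeHist p₂ c₂ (newParent p₂ c₂) (V, E)) := by
  rw [hH.collapseEdgeHist_collapseEdgeHist h₁ h₂.1 hne.symm hp₂ hc₂,
    hH.collapseEdgeHist_collapseEdgeHist h₂ h₁.1 hne hp₁ hc₁, Set.pair_comm]
  subst hp₂ hc₂ hp₁ hc₁
  have hmem : ∀ {a b}, (a, b) ∈ E → a ∈ V ∧ b ∈ V := fun h => hH.1.edge_mem _ h
  have hn₁ := hH.newParent_notMem h₁
  have hn₂ := hH.newParent_notMem h₂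
  have hEq : ∀ v ∈ V, _ := fun v hv => collapseMap_collapseMap_comm
    (hH.newParent_collapseMap_comm h₁ h₂ hne)
    (fun ⟨h1, h2, h3, h4⟩ => by
      rw [collapseMap_of_ne (Ne.symm h1) (Ne.symm h3), collapseMap_of_ne (Ne.symm h2) (Ne.symm h4),
        collapseMap_of_ne h1 h2, collapseMap_of_ne h3 h4]
      exact ⟨rfl, rfl⟩)
    ⟨ne_of_mem_of_not_mem (hmem h₂.1).1 hn₁, ne_of_mem_of_not_mem (hmem h₂.1).2 hn₁,
      ne_of_mem_of_not_mem hv hn₁⟩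
    ⟨ne_of_mem_of_not_mem (hmem h₁.1).1 hn₂, ne_of_mem_of_not_mem (hmem h₁.1).2 hn₂,
      ne_of_mem_of_not_mem hv hn₂⟩
  refine Prod.ext (Set.image_congr hEq) (Set.image_congr fun e he => ?_)
  simp only [Prod.map, Function.comp, hEq _ (hmem he.1).1, hEq _ (hmem he.1).2]

end IsHistory

end Collapse

section LabelCollapse

variable {t s s₁ s₂ : Hist Y} {p c p₁ c₁ p₂ c₂ : HNode Y}

lemma labelCollapseStep_iff : LabelCollapseStep t s ↔
    ∃ p c, LabelCollapsibleEdge t p c ∧ s = collapseEdgeHist p c (newParent p c) t := by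
  constructor
  · rintro ⟨ℓ, Up, Uc, he, hUc, rfl⟩
    exact ⟨_, _, ⟨he, ℓ, Up, Uc, rfl, rfl, hUc⟩, rfl⟩
  · rintro ⟨_, _, ⟨he, ℓ, Up, Uc, rfl, rfl, hUc⟩, rfl⟩
    exact ⟨ℓ, Up, Uc, he, hUc, rfl⟩

lemma LabelCollapsed.not_labelCollapseStep (h : LabelCollapsed t) : ¬ LabelCollapseStep t s :=
  fun ⟨ℓ, Up, Uc, he, hUc, _⟩ => hUc (h ℓ Up Uc he)

lemma LabelCollapsibleEdge.isCollapsibleEdge (h : LabelCollapsibleEdge t p c) :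
    IsCollapsibleEdge t.2 p c :=
  let ⟨he, ℓ, Up, Uc, hp, hc, hUc⟩ := h
  ⟨he, ℓ, Up, ℓ, Uc, hp, hc, hUc⟩

lemma LabelCollapsibleEdge.exists_collapseMap_node (hH : IsHistory t.1 t.2)
    (hpc : LabelCollapsibleEdge t p c) (ℓ : Y) (U : Set (Set Y)) :
    ∃ U', collapseMap p c (newParent p c) (HNode.node ℓ U) = HNode.node ℓ U' ∧
      (U ≠ ∅ → U' ≠ ∅) := by
  rcases collapseMap_eq_or p c (newParent p c) (HNode.node ℓ U) with ⟨hv, h⟩ | ⟨-, h⟩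
  · obtain ⟨he, ℓ₁, Up, Uc, rfl, rfl, hUc⟩ := hpc
    obtain rfl : ℓ = ℓ₁ := by rcases hv with h | h <;> exact (HNode.node.inj h).1
    refine ⟨_, h.trans newParent_node, fun _ => ?_⟩
    obtain ⟨X, hX⟩ := Set.nonempty_iff_ne_empty.2 hUc
    have hCc := hH.cladeUnion_notMem_self (hH.1.edge_mem _ he).2
    exact Set.nonempty_iff_ne_empty.1 ⟨X, Or.inr hX, fun h : X = _ => hCc (h ▸ hX)⟩
  · exact ⟨U, h, id⟩

lemma LabelCollapsibleEdge.map_collapseEdgeHist (hH : IsHistory t.1 t.2)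
    (h₁ : LabelCollapsibleEdge t p₁ c₁) (h₂ : LabelCollapsibleEdge t p₂ c₂)
    (hne : (p₂, c₂) ≠ (p₁, c₁)) :
    LabelCollapsibleEdge (collapseEdgeHist p₁ c₁ (newParent p₁ c₁) t)
      (collapseMap p₁ c₁ (newParent p₁ c₁) p₂) (collapseMap p₁ c₁ (newParent p₁ c₁) c₂) := by
  obtain ⟨he₂, ℓ, A, B, rfl, rfl, hB⟩ := h₂
  obtain ⟨A', hA', -⟩ := h₁.exists_collapseMap_node hH ℓ A
  obtain ⟨B', hB', hB'ne⟩ := h₁.exists_collapseMap_node hH ℓ B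
  exact ⟨⟨_, ⟨he₂, hne⟩, rfl⟩, ℓ, A', B', hA', hB', hB'ne hB⟩

lemma IsHistory.labelCollapseStep (hH : IsHistory t.1 t.2) (h : LabelCollapseStep t s) :
    IsHistory s.1 s.2 := by
  obtain ⟨p, c, hpc, rfl⟩ := labelCollapseStep_iff.1 h
  exact isHistory_collapseEdgeHist hH hpc.isCollapsibleEdge

lemma IsHistory.ncard_lt_of_labelCollapseStep (hH : IsHistory t.1 t.2)
    (h : LabelCollapseStep t s) : s.2.ncard < t.2.ncard := by
  obtain ⟨p, c, hpc, rfl⟩ := labelCollapseStep_iff.1 h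
  calc _ ≤ (t.2 \ {(p, c)}).ncard := Set.ncard_image_le hH.finite_edges_s9.sdiff
    _ < t.2.ncard := Set.ncard_sdiff_singleton_lt_of_mem hpc.1 hH.finite_edges_s9

theorem IsHistory.labelCollapseStep_diamond (hH : IsHistory t.1 t.2)
    (h₁ : LabelCollapseStep t s₁) (h₂ : LabelCollapseStep t s₂) :
    s₁ = s₂ ∨ ∃ u, LabelCollapseStep s₁ u ∧ LabelCollapseStep s₂ u := by
  obtain ⟨V, E⟩ := t
  obtain ⟨p₁, c₁, he₁, rfl⟩ := labelCollapseStep_iff.1 h₁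
  obtain ⟨p₂, c₂, he₂, rfl⟩ := labelCollapseStep_iff.1 h₂
  by_cases hne : (p₁, c₁) = (p₂, c₂)
  · obtain ⟨rfl, rfl⟩ := Prod.mk.inj hne
    exact Or.inl rfl
  exact Or.inr ⟨_,
    labelCollapseStep_iff.2 ⟨_, _, he₁.map_collapseEdgeHist hH he₂ (Ne.symm hne), rfl⟩,
    labelCollapseStep_iff.2 ⟨_, _, he₂.map_collapseEdgeHist hH he₁ hne,
      hH.collapseEdgeHist_comm he₁.isCollapsibleEdge he₂.isCollapsibleEdge hne rfl rfl rfl rfl⟩⟩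

theorem IsHistory.exists_labelCollapsed (hH : IsHistory t.1 t.2) :
    ∃ tc, Relation.ReflTransGen LabelCollapseStep t tc ∧ LabelCollapsed tc ∧
      IsHistory tc.1 tc.2 := by
  obtain ⟨tc, ⟨hreach, hH'⟩, hmin⟩ := (measure fun s : Hist Y => s.2.ncard).wf.has_min
    {s | Relation.ReflTransGen LabelCollapseStep t s ∧ IsHistory s.1 s.2} ⟨t, .refl, hH⟩
  refine ⟨tc, hreach, fun ℓ Up Uc he => ?_, hH'⟩
  by_contra hUc
  have hstep : LabelCollapseStep tc _ := ⟨ℓ, Up, Uc, he, hUc, rfl⟩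
  exact hmin _ ⟨hreach.tail hstep, hH'.labelCollapseStep hstep⟩
    (hH'.ncard_lt_of_labelCollapseStep hstep)

theorem IsHistory.eq_of_labelCollapsed {t₁ t₂ : Hist Y} (hH : IsHistory t.1 t.2)
    (h₁ : Relation.ReflTransGen LabelCollapseStep t t₁)
    (h₂ : Relation.ReflTransGen LabelCollapseStep t t₂)
    (hc₁ : LabelCollapsed t₁) (hc₂ : LabelCollapsed t₂) : t₁ = t₂ := by
  -- the diamond property holds only from histories, so restrict the steps to them
  let r : Hist Y → Hist Y → Prop := fun s s' => IsHistory s.1 s.2 ∧ LabelCollapseStep s s'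
  have lift : ∀ {s}, Relation.ReflTransGen LabelCollapseStep t s →
      Relation.ReflTransGen r t s ∧ IsHistory s.1 s.2 := fun hs => by
    induction hs with
    | refl => exact ⟨.refl, hH⟩
    | tail _ hstep ih => exact ⟨ih.1.tail ⟨ih.2, hstep⟩, ih.2.labelCollapseStep hstep⟩
  have stuck : ∀ {s u}, LabelCollapsed s → Relation.ReflTransGen r s u → s = u := fun hs hsu =>
    (Relation.ReflTransGen.cases_head hsu).resolve_right fun ⟨_, ⟨_, hstep⟩, _⟩ =>
      hs.not_labelCollapseStep hstep
  obtain ⟨u, h₁u, h₂u⟩ := Relation.church_rosser (r := r) (fun a b c ⟨ha, hab⟩ ⟨_, hac⟩ => by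
      rcases ha.labelCollapseStep_diamond hab hac with rfl | ⟨d, hbd, hcd⟩
      · exact ⟨b, .refl, .refl⟩
      · exact ⟨d, .single ⟨ha.labelCollapseStep hab, hbd⟩, .single ⟨ha.labelCollapseStep hac, hcd⟩⟩)
    (lift h₁).1 (lift h₂).1
  rw [stuck hc₁ h₁u, stuck hc₂ h₂u]

end LabelCollapse

/-- a history determines a unique label-collapsed history, reached by a
finite sequence of collapses of label-collapsible edges; any such sequence ending in a
label-collapsed history ends at that same history. -/
theorem label_collapse_unique
    (t₀ : Hist Y) (h : IsHistory t₀.1 t₀.2) :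
    ∃ tc : Hist Y,
      Relation.ReflTransGen LabelCollapseStep t₀ tc ∧ LabelCollapsed tc ∧
      IsHistory tc.1 tc.2 ∧
      ∀ t' : Hist Y, Relation.ReflTransGen LabelCollapseStep t₀ t' → LabelCollapsed t' →
        t' = tc := by
  obtain ⟨tc, hreach, hcoll, hhist⟩ := h.exists_labelCollapsed
  exact ⟨tc, hreach, hcoll, hhist, fun t' hreach' hcoll' =>
    h.eq_of_labelCollapsed hreach' hreach hcoll' hcoll⟩

end HistorySDAGs
end
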